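/- arXiv:2401.14298 — 5 statements merged into one kernel-verified Lean document; each statement's English description precedes it below -/
import Mathlib

section
/- Let p > 2 be a prime, let u be a unit of ℤ_p (‖u‖_p = 1) that is not a square in ℚ_p, and set v = -1 if p ≡ 3 (mod 4) and v = -u if p ≡ 1 (mod 4). Then the three binary quadratic forms over ℚ_p given by Q_{-v}(x) = x₁² - v·x₂², Q_p(x) = x₁² + p·x₂², Q_{up}(x) = u·x₁² + p·x₂² are anisotropic, every anisotropic quadratic form Q on ℚ_p² is linearly equivalent to t·Q_κ for some t ∈ ℚ_p^× and some κ ∈ {-v, p, up}, and no two of the three forms Q_{-v}, Q_p, Q_{up} are linearly equivalent up to a scaling by an element of ℚ_p^×. -/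
/-!
For odd `p`, the square classes of `ℚ_[p]ˣ` are `1, u, p, u p`: the parity of the valuation
separates `1, u` from `p, u p`, and by Hensel's lemma a unit is a square exactly when its residue
is one, so any two non-square units differ by a square. The element `v` is a non-square unit
(`-1` is a non-square exactly when `p ≡ 3 mod 4`), hence lies in the class of `u`.

Diagonalise an anisotropic form as `a x² + b y²`; then `-b / a` is not a square. If `b / a` is
a unit `w` up to squares, `-w` is a non-square unit, so `b / a` is in the class of `-v` and the
form is `a • ⟨1, -v⟩`; otherwise `b / a` is `p` or `u p` up to squares, giving `a • ⟨1, p⟩` or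
`(a / u) • ⟨u, p⟩`. Scaling a binary form by `t` multiplies its discriminant by `t²`, and the
discriminants `-v`, `p`, `u p` lie in different square classes.
-/

namespace QuadraticMap

variable {K : Type*} [Field K]

theorem Equivalent.anisotropic_iff {M₁ M₂ : Type*} [AddCommGroup M₁] [AddCommGroup M₂]
    [Module K M₁] [Module K M₂] {Q₁ : QuadraticMap K M₁ K} {Q₂ : QuadraticMap K M₂ K}
    (h : Q₁.Equivalent Q₂) : Q₁.Anisotropic ↔ Q₂.Anisotropic := by
  obtain ⟨f⟩ := h
  refine ⟨fun h₁ x hx => ?_, fun h₂ x hx => ?_⟩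
  · simpa using h₁ (f.symm x) ((f.symm.map_app x).trans hx)
  · simpa using h₂ (f x) ((f.map_app x).trans hx)

theorem weightedSumSquares_fin_two_apply (a b : K) (x : Fin 2 → K) :
    weightedSumSquares K ![a, b] x = a * x 0 ^ 2 + b * x 1 ^ 2 := by
  simp [weightedSumSquares_apply, Fin.sum_univ_two]
  ring

theorem anisotropic_weightedSumSquares_fin_two_iff {a b : K} :
    (weightedSumSquares K ![a, b]).Anisotropic ↔ a ≠ 0 ∧ b ≠ 0 ∧ ¬IsSquare (-b / a) := by
  simp only [Anisotropic, weightedSumSquares_fin_two_apply]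
  constructor
  · intro h
    have ha : a ≠ 0 := fun ha => by simpa using congrFun (h ![1, 0] (by simp [ha])) 0
    refine ⟨ha, fun hb => ?_, fun ⟨y, hy⟩ => ?_⟩
    · simpa using congrFun (h ![0, 1] (by simp [hb])) 1
    · have hy' : a * y ^ 2 + b * 1 ^ 2 = 0 := by field_simp at hy; linear_combination -hy
      simpa using congrFun (h ![y, 1] (by simpa using hy')) 1
  · rintro ⟨ha, hb, hsq⟩ x hx
    by_cases h1 : x 1 = 0
    · have h0 : x 0 = 0 := by simpa [h1, ha] using hx
      ext i; fin_cases i <;> simp [h0, h1]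
    · exact absurd ⟨x 0 / x 1, by field_simp; linear_combination -hx⟩ hsq

theorem smul_weightedSumSquares {ι : Type*} [Fintype ι] (t : K) (w : ι → K) :
    t • weightedSumSquares K w = weightedSumSquares K (t • w) := by
  ext x
  simp [weightedSumSquares_apply, Finset.mul_sum, mul_assoc]

theorem equivalent_weightedSumSquares_of_eq_mul_sq {ι : Type*} [Fintype ι] {w w' s : ι → K}
    (hs : ∀ i, s i ≠ 0) (h : ∀ i, w i = w' i * s i ^ 2) :
    (weightedSumSquares K w).Equivalent (weightedSumSquares K w') :=
  ⟨QuadraticForm.isometryEquivWeightedSumSquaresWeightedSumSquares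
    (fun i => Units.mk0 (s i) (hs i)) fun i => (h i).symm⟩

theorem equivalent_smul_weightedSumSquares_fin_two {a b t x y s r : K} (hs : s ≠ 0)
    (hr : r ≠ 0) (ha : a = t * x * s ^ 2) (hb : b = t * y * r ^ 2) :
    (weightedSumSquares K ![a, b]).Equivalent (t • weightedSumSquares K ![x, y]) := by
  rw [smul_weightedSumSquares]
  refine equivalent_weightedSumSquares_of_eq_mul_sq (s := ![s, r]) ?_ ?_ <;>
    intro i <;> fin_cases i <;> simp [ha, hb, hs, hr]

theorem exists_equivalent_weightedSumSquares_fin_two [Invertible (2 : K)]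
    (Q : QuadraticForm K (Fin 2 → K)) : ∃ a b : K, Q.Equivalent (weightedSumSquares K ![a, b]) := by
  obtain ⟨w, hw⟩ := QuadraticForm.equivalent_weightedSumSquares Q
  revert w
  rw [Module.finrank_fin_fun]
  intro w hw
  have hw' : w = ![w 0, w 1] := by ext i; fin_cases i <;> rfl
  exact ⟨w 0, w 1, hw' ▸ hw⟩

variable [Invertible (2 : K)]

theorem Equivalent.isSquare_discr'_mul {n : Type*} [Fintype n] [DecidableEq n]
    {Q₁ Q₂ : QuadraticForm K (n → K)} (h : Q₁.Equivalent Q₂) :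
    IsSquare (Q₁.discr' * Q₂.discr') := by
  obtain ⟨f⟩ := h
  have hcomp : Q₂.comp (f.toLinearEquiv : (n → K) →ₗ[K] n → K) = Q₁ := by
    ext x; exact f.map_app x
  rw [← hcomp, QuadraticForm.discr'_comp]
  exact ⟨(LinearMap.toMatrix' (f.toLinearEquiv : (n → K) →ₗ[K] n → K)).det * Q₂.discr', by ring⟩

theorem discr'_weightedSumSquares {n : Type*} [Fintype n] [DecidableEq n] (w : n → K) :
    QuadraticForm.discr' (weightedSumSquares K w) = ∏ i, w i := by
  suffices QuadraticForm.toMatrix' (weightedSumSquares K w) = Matrix.diagonal w by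
    rw [QuadraticForm.discr', this, Matrix.det_diagonal]
  ext i j
  rw [QuadraticForm.toMatrix', LinearMap.toMatrix₂'_apply, associated_apply]
  by_cases hij : i = j
  · subst hij
    simp [weightedSumSquares_apply, Pi.single_apply, ← two_mul]
    field_simp
    ring
  · simp [weightedSumSquares_apply, Pi.single_apply, hij, mul_add, mul_ite,
      Finset.sum_add_distrib, eq_comm (a := j)]

theorem not_equivalent_smul_weightedSumSquares_fin_two {a b t x y : K} (ht : t ≠ 0)
    (h : ¬IsSquare (a * b * (x * y))) :
    ¬(weightedSumSquares K ![a, b]).Equivalent (t • weightedSumSquares K ![x, y]) := by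
  intro he
  have hsq := he.isSquare_discr'_mul
  rw [QuadraticForm.discr'_smul, discr'_weightedSumSquares, discr'_weightedSumSquares] at hsq
  simp only [Fin.prod_univ_two, Fintype.card_fin, Matrix.cons_val_zero, Matrix.cons_val_one] at hsq
  have hdiv := hsq.div (IsSquare.sq t)
  rw [show a * b * (t ^ 2 * (x * y)) / t ^ 2 = a * b * (x * y) by field_simp] at hdiv
  exact h hdiv

end QuadraticMap

theorem FiniteField.isSquare_mul_of_not_isSquare {F : Type*} [Field F] [Fintype F]
    [DecidableEq F] {a b : F} (ha : ¬IsSquare a) (hb : ¬IsSquare b) : IsSquare (a * b) := by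
  have ha0 : a ≠ 0 := fun h => ha (h ▸ IsSquare.zero)
  have hb0 : b ≠ 0 := fun h => hb (h ▸ IsSquare.zero)
  rw [← quadraticChar_one_iff_isSquare (mul_ne_zero ha0 hb0), map_mul,
    quadraticChar_neg_one_iff_not_isSquare.mpr ha, quadraticChar_neg_one_iff_not_isSquare.mpr hb]
  norm_num

namespace PadicInt

variable {p : ℕ} [Fact p.Prime]

theorem toZMod_ne_zero_iff {z : ℤ_[p]} : toZMod z ≠ 0 ↔ ‖z‖ = 1 := by
  rw [ne_eq, ← RingHom.mem_ker, ker_toZMod, IsLocalRing.mem_maximalIdeal, mem_nonunits, not_lt]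
  exact (norm_le_one z).ge_iff_eq

open Polynomial in
theorem isSquare_coe_iff_isSquare_toZMod (hp : p ≠ 2) {w : ℤ_[p]} (hw : ‖w‖ = 1) :
    IsSquare (w : ℚ_[p]) ↔ IsSquare (toZMod w) := by
  constructor
  · rintro ⟨y, hy⟩
    have hy1 : ‖y‖ ≤ 1 := by
      have : ‖y‖ * ‖y‖ = 1 := by rw [← norm_mul, ← hy, padic_norm_e_of_padicInt, hw]
      nlinarith [norm_nonneg y]
    let z : ℤ_[p] := ⟨y, hy1⟩
    have hw' : w = z * z := Subtype.ext hy
    exact ⟨toZMod z, by rw [hw', map_mul]⟩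
  · rintro ⟨r, hr⟩
    have hr0 : r ≠ 0 := by
      rintro rfl
      exact toZMod_ne_zero_iff.mpr hw (by simpa using hr)
    have h2 : (2 : ZMod p) ≠ 0 := Ring.two_ne_zero (by rwa [ZMod.ringChar_zmod_n])
    have hderiv : IsUnit (2 * (r.val : ℤ_[p])) :=
      isUnit_iff.mpr (toZMod_ne_zero_iff.mp (by simp [map_ofNat, h2, hr0]))
    obtain ⟨z, hz, -⟩ := HenselianRing.is_henselian (I := IsLocalRing.maximalIdeal ℤ_[p])
      (X ^ 2 - C w) (monic_X_pow_sub_C w two_ne_zero) (r.val : ℤ_[p])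
      (by simp [← ker_toZMod, hr, sq])
      (by convert hderiv.map (Ideal.Quotient.mk _) using 2; simp [one_add_one_eq_two])
    exact ⟨z, by simpa [sub_eq_zero, sq, eq_comm] using congrArg ((↑) : ℤ_[p] → ℚ_[p]) hz⟩

theorem exists_eq_sq_mul_of_not_isSquare (hp : p ≠ 2) {u w : ℤ_[p]} (hu : ‖u‖ = 1)
    (hw : ‖w‖ = 1) (husq : ¬IsSquare (u : ℚ_[p])) (hwsq : ¬IsSquare (w : ℚ_[p])) :
    ∃ r : ℚ_[p], r ≠ 0 ∧ (w : ℚ_[p]) = r ^ 2 * u := by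
  rw [isSquare_coe_iff_isSquare_toZMod hp hu] at husq
  rw [isSquare_coe_iff_isSquare_toZMod hp hw] at hwsq
  obtain ⟨r, hr⟩ := (isSquare_coe_iff_isSquare_toZMod hp (w := w * u) (by simp [hu, hw])).mpr
    (by rw [map_mul]; exact FiniteField.isSquare_mul_of_not_isSquare hwsq husq)
  have hu0 : (u : ℚ_[p]) ≠ 0 := fun h => by simp [coe_eq_zero.mp h] at hu
  have hw0 : (w : ℚ_[p]) ≠ 0 := fun h => by simp [coe_eq_zero.mp h] at hw
  push_cast at hr
  refine ⟨r / u, by rintro h; simp_all, ?_⟩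
  field_simp
  linear_combination hr

theorem norm_eq_one_and_not_isSquare_of_mod_four (hp : p ≠ 2) {u v : ℤ_[p]} (hu : ‖u‖ = 1)
    (husq : ¬IsSquare (u : ℚ_[p])) (hv3 : p % 4 = 3 → v = -1) (hv1 : p % 4 = 1 → v = -u) :
    ‖v‖ = 1 ∧ ¬IsSquare (v : ℚ_[p]) := by
  have hneg_one : IsSquare ((-1 : ℤ_[p]) : ℚ_[p]) ↔ p % 4 ≠ 3 := by
    rw [isSquare_coe_iff_isSquare_toZMod hp (by simp), map_neg, map_one,
      ZMod.exists_sq_eq_neg_one_iff]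
  have hp4 : p % 4 = 1 ∨ p % 4 = 3 := by
    have := (Nat.Prime.mod_two_eq_one_iff_ne_two Fact.out).mpr hp
    omega
  rcases hp4 with h | h
  · rw [hv1 h]
    refine ⟨by simpa using hu, fun ⟨y, hy⟩ => husq ?_⟩
    obtain ⟨i, hi⟩ := hneg_one.mpr (by omega)
    push_cast at hy hi
    exact ⟨i * y, by linear_combination -hy + y * y * hi⟩
  · rw [hv3 h]
    exact ⟨by simp, by simpa using hneg_one.not.mpr (by omega)⟩

end PadicInt

namespace Padic

variable {p : ℕ} [Fact p.Prime]

theorem valuation_eq_zero_of_norm_eq_one {c : ℚ_[p]} (hc : ‖c‖ = 1) : c.valuation = 0 := by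
  have hc0 : c ≠ 0 := by rintro rfl; simp at hc
  have hp1 : (1 : ℝ) < p := by exact_mod_cast (Fact.out : p.Prime).one_lt
  rw [norm_eq_zpow_neg_valuation hc0, ← zpow_zero (p : ℝ)] at hc
  simpa using zpow_right_injective₀ (by positivity) hp1.ne' hc

theorem not_isSquare_mul_p {c : ℚ_[p]} (hc : ‖c‖ = 1) : ¬IsSquare (c * p) := by
  rintro ⟨y, hy⟩
  have hc0 : c ≠ 0 := by rintro rfl; simp at hc
  have hp0 : (p : ℚ_[p]) ≠ 0 := by exact_mod_cast (Fact.out : p.Prime).ne_zero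
  have hy0 : y ≠ 0 := by rintro rfl; simp [hc0, hp0] at hy
  have := congrArg valuation hy
  rw [valuation_mul hc0 hp0, valuation_mul hy0 hy0, valuation_eq_zero_of_norm_eq_one hc,
    valuation_p] at this
  omega

theorem exists_eq_sq_mul_unit_or_eq_sq_mul_p_mul_unit {c : ℚ_[p]} (hc : c ≠ 0) :
    ∃ s : ℚ_[p], s ≠ 0 ∧ ∃ w : ℤ_[p], ‖w‖ = 1 ∧ (c = s ^ 2 * w ∨ c = s ^ 2 * p * w) := by
  have hp0 : (p : ℚ_[p]) ≠ 0 := by exact_mod_cast (Fact.out : p.Prime).ne_zero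
  have hw : ‖c * (p : ℚ_[p]) ^ (-c.valuation)‖ = 1 := by
    rw [norm_mul, norm_zpow, norm_p, norm_eq_zpow_neg_valuation hc, inv_zpow, ← zpow_neg,
      ← zpow_add₀ (by simp [(Fact.out : p.Prime).ne_zero])]
    simp
  have hc : c = (p : ℚ_[p]) ^ c.valuation * (c * (p : ℚ_[p]) ^ (-c.valuation)) := by
    rw [zpow_neg]; field_simp
  obtain ⟨k, hk | hk⟩ := Int.even_or_odd' c.valuation
  · refine ⟨(p : ℚ_[p]) ^ k, zpow_ne_zero _ hp0, ⟨_, hw.le⟩, hw, Or.inl ?_⟩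
    have hpk : ((p : ℚ_[p]) ^ k) ^ 2 = (p : ℚ_[p]) ^ c.valuation := by
      rw [hk, mul_comm, zpow_mul, zpow_two, sq]
    rw [hpk]; exact hc
  · refine ⟨(p : ℚ_[p]) ^ k, zpow_ne_zero _ hp0, ⟨_, hw.le⟩, hw, Or.inr ?_⟩
    have hpk : ((p : ℚ_[p]) ^ k) ^ 2 * p = (p : ℚ_[p]) ^ c.valuation := by
      rw [hk, zpow_add₀ hp0, zpow_one, mul_comm 2 k, zpow_mul, zpow_two, sq]
    rw [hpk]; exact hc

open QuadraticMap

theorem anisotropic_weightedSumSquares_p_of_norm_eq_one {c : ℚ_[p]} (hc : ‖c‖ = 1) :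
    (weightedSumSquares ℚ_[p] ![c, (p : ℚ_[p])]).Anisotropic := by
  have hc0 : c ≠ 0 := by rintro rfl; simp at hc
  have hp0 : (p : ℚ_[p]) ≠ 0 := by exact_mod_cast (Fact.out : p.Prime).ne_zero
  refine anisotropic_weightedSumSquares_fin_two_iff.mpr ⟨hc0, hp0, ?_⟩
  rw [show -(p : ℚ_[p]) / c = -c⁻¹ * p by field_simp]
  exact not_isSquare_mul_p (by simp [hc])

theorem exists_equivalent_smul_of_anisotropic (hp : p ≠ 2) {u v : ℤ_[p]} (hu : ‖u‖ = 1)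
    (husq : ¬IsSquare (u : ℚ_[p])) (hv : ‖v‖ = 1) (hvsq : ¬IsSquare (v : ℚ_[p]))
    {Q : QuadraticForm ℚ_[p] (Fin 2 → ℚ_[p])} (hQ : Q.Anisotropic) :
    ∃ t : ℚ_[p], t ≠ 0 ∧
      (Q.Equivalent (t • weightedSumSquares ℚ_[p] ![1, -(v : ℚ_[p])]) ∨
       Q.Equivalent (t • weightedSumSquares ℚ_[p] ![1, (p : ℚ_[p])]) ∨
       Q.Equivalent (t • weightedSumSquares ℚ_[p] ![(u : ℚ_[p]), (p : ℚ_[p])])) := by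
  let : Invertible (2 : ℚ_[p]) := invertibleTwo
  obtain ⟨a, b, hab⟩ := exists_equivalent_weightedSumSquares_fin_two Q
  obtain ⟨ha, hb, hsq⟩ :=
    anisotropic_weightedSumSquares_fin_two_iff.mp (hab.anisotropic_iff.mp hQ)
  have hu0 : (u : ℚ_[p]) ≠ 0 := fun h => by simp [PadicInt.coe_eq_zero.mp h] at hu
  obtain ⟨s, hs, w, hw, hc | hc⟩ :=
    exists_eq_sq_mul_unit_or_eq_sq_mul_p_mul_unit (div_ne_zero hb ha)
  · have hnw : ¬IsSquare ((-w : ℤ_[p]) : ℚ_[p]) := fun ⟨y, hy⟩ =>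
      hsq ⟨s * y, by push_cast at hy; rw [neg_div, hc]; linear_combination s ^ 2 * hy⟩
    obtain ⟨r₁, hr₁, h₁⟩ :=
      PadicInt.exists_eq_sq_mul_of_not_isSquare hp hu (by simpa using hw) husq hnw
    obtain ⟨r₂, hr₂, h₂⟩ := PadicInt.exists_eq_sq_mul_of_not_isSquare hp hu hv husq hvsq
    refine ⟨a, ha, Or.inl (hab.trans (equivalent_smul_weightedSumSquares_fin_two one_ne_zero
      (r := s * r₁ / r₂) (by simp [hs, hr₁, hr₂]) (by ring) ?_))⟩
    push_cast at h₁
    rw [div_eq_iff ha] at hc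
    rw [hc, h₂]
    field_simp
    linear_combination -h₁
  · by_cases hwsq : IsSquare (w : ℚ_[p])
    · obtain ⟨r, hr⟩ := hwsq
      have hr0 : r ≠ 0 := by rintro rfl; simp [PadicInt.coe_eq_zero] at hr; simp [hr] at hw
      rw [div_eq_iff ha] at hc
      exact ⟨a, ha, Or.inr (Or.inl (hab.trans (equivalent_smul_weightedSumSquares_fin_two
        one_ne_zero (r := s * r) (by simp [hs, hr0]) (by ring) (by rw [hc, hr]; ring))))⟩
    · obtain ⟨r, hr, h⟩ := PadicInt.exists_eq_sq_mul_of_not_isSquare hp hu hw husq hwsq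
      rw [div_eq_iff ha] at hc
      refine ⟨a / u, div_ne_zero ha hu0, Or.inr (Or.inr (hab.trans
        (equivalent_smul_weightedSumSquares_fin_two one_ne_zero (r := s * r * u)
          (by simp [hs, hr, hu0]) (by field_simp) ?_)))⟩
      rw [hc, h]
      field_simp

theorem not_equivalent_smul_weightedSumSquares {u v : ℤ_[p]} (hu : ‖u‖ = 1)
    (husq : ¬IsSquare (u : ℚ_[p])) (hv : ‖v‖ = 1) {t : ℚ_[p]} (ht : t ≠ 0) :
    ¬(weightedSumSquares ℚ_[p] ![1, -(v : ℚ_[p])]).Equivalent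
        (t • weightedSumSquares ℚ_[p] ![1, (p : ℚ_[p])]) ∧
      ¬(weightedSumSquares ℚ_[p] ![1, -(v : ℚ_[p])]).Equivalent
        (t • weightedSumSquares ℚ_[p] ![(u : ℚ_[p]), (p : ℚ_[p])]) ∧
      ¬(weightedSumSquares ℚ_[p] ![1, (p : ℚ_[p])]).Equivalent
        (t • weightedSumSquares ℚ_[p] ![(u : ℚ_[p]), (p : ℚ_[p])]) := by
  let : Invertible (2 : ℚ_[p]) := invertibleTwo
  have hp0 : (p : ℚ_[p]) ≠ 0 := by exact_mod_cast (Fact.out : p.Prime).ne_zero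
  refine ⟨not_equivalent_smul_weightedSumSquares_fin_two ht ?_,
    not_equivalent_smul_weightedSumSquares_fin_two ht ?_,
    not_equivalent_smul_weightedSumSquares_fin_two ht fun h => husq ?_⟩
  · rw [show 1 * -(v : ℚ_[p]) * (1 * p) = -v * p by ring]
    exact not_isSquare_mul_p (by simpa using hv)
  · rw [show 1 * -(v : ℚ_[p]) * (u * p) = -v * u * p by ring]
    exact not_isSquare_mul_p (by simp [hu, hv])
  · rw [show 1 * (p : ℚ_[p]) * (u * p) = u * p ^ 2 by ring] at h
    simpa [hp0] using h.div (IsSquare.sq (p : ℚ_[p]))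

end Padic

open Padic in
theorem stmt0 (p : ℕ) [Fact p.Prime] (hp2 : 2 < p)
    (u : ℤ_[p]) (hu : ‖u‖ = 1) (husq : ¬ ∃ y : ℚ_[p], y ^ 2 = (u : ℚ_[p]))
    (v : ℤ_[p]) (hv3 : p % 4 = 3 → v = -1) (hv1 : p % 4 = 1 → v = -u) :
    (QuadraticMap.weightedSumSquares ℚ_[p] ![(1 : ℚ_[p]), -(v : ℚ_[p])]).Anisotropic ∧
    (QuadraticMap.weightedSumSquares ℚ_[p] ![(1 : ℚ_[p]), (p : ℚ_[p])]).Anisotropic ∧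
    (QuadraticMap.weightedSumSquares ℚ_[p] ![(u : ℚ_[p]), (p : ℚ_[p])]).Anisotropic ∧
    (∀ Q : QuadraticForm ℚ_[p] (Fin 2 → ℚ_[p]), Q.Anisotropic →
      ∃ t : ℚ_[p], t ≠ 0 ∧
        (Q.Equivalent (t • QuadraticMap.weightedSumSquares ℚ_[p] ![(1 : ℚ_[p]), -(v : ℚ_[p])]) ∨
         Q.Equivalent (t • QuadraticMap.weightedSumSquares ℚ_[p] ![(1 : ℚ_[p]), (p : ℚ_[p])]) ∨
         Q.Equivalent (t • QuadraticMap.weightedSumSquares ℚ_[p] ![(u : ℚ_[p]), (p : ℚ_[p])]))) ∧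
    (∀ t : ℚ_[p], t ≠ 0 →
      ¬ (QuadraticMap.weightedSumSquares ℚ_[p] ![(1 : ℚ_[p]), -(v : ℚ_[p])]).Equivalent
          (t • QuadraticMap.weightedSumSquares ℚ_[p] ![(1 : ℚ_[p]), (p : ℚ_[p])]) ∧
      ¬ (QuadraticMap.weightedSumSquares ℚ_[p] ![(1 : ℚ_[p]), -(v : ℚ_[p])]).Equivalent
          (t • QuadraticMap.weightedSumSquares ℚ_[p] ![(u : ℚ_[p]), (p : ℚ_[p])]) ∧
      ¬ (QuadraticMap.weightedSumSquares ℚ_[p] ![(1 : ℚ_[p]), (p : ℚ_[p])]).Equivalent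
          (t • QuadraticMap.weightedSumSquares ℚ_[p] ![(u : ℚ_[p]), (p : ℚ_[p])])) := by
  have hp : p ≠ 2 := by omega
  have husq' : ¬IsSquare (u : ℚ_[p]) := by
    simpa [isSquare_iff_exists_sq, eq_comm] using husq
  obtain ⟨hv, hvsq⟩ := PadicInt.norm_eq_one_and_not_isSquare_of_mod_four hp hu husq' hv3 hv1
  have hv0 : (v : ℚ_[p]) ≠ 0 := fun h => by simp [PadicInt.coe_eq_zero.mp h] at hv
  refine ⟨?_, anisotropic_weightedSumSquares_p_of_norm_eq_one (by simp),
    anisotropic_weightedSumSquares_p_of_norm_eq_one (by simpa using hu),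
    fun Q hQ => exists_equivalent_smul_of_anisotropic hp hu husq' hv hvsq hQ,
    fun t ht => not_equivalent_smul_weightedSumSquares hu husq' hv ht⟩
  exact QuadraticMap.anisotropic_weightedSumSquares_fin_two_iff.mpr
    ⟨one_ne_zero, neg_ne_zero.mpr hv0, by simpa using hvsq⟩
end

section
/- Every matrix L ∈ SO(3)_p has all its entries in ℤ_p (i.e. |ℓ_{ij}|_p ≤ 1 for all i, j), and SO(3)_p is a compact subset of the space of 3×3 matrices over ℚ_p with the topology induced by the norm ‖L‖_p = max_{i,j} |ℓ_{ij}|_p. -/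
open scoped Matrix

/-- The compact special orthogonal group `SO(3)_p`, as the set of `3 × 3` matrices over
`ℚ_p` preserving the quadratic form with matrix `A₊ = diag(1, -v, p)` and of determinant 1. -/
def SO3set (p : ℕ) [Fact p.Prime] (v : ℤ_[p]) : Set (Matrix (Fin 3) (Fin 3) ℚ_[p]) :=
  {L | L.transpose * Matrix.diagonal ![(1 : ℚ_[p]), -(v : ℚ_[p]), (p : ℚ_[p])] * L =
        Matrix.diagonal ![(1 : ℚ_[p]), -(v : ℚ_[p]), (p : ℚ_[p])] ∧ L.det = 1}

/-!
Every column `x` of `L ∈ SO(3)_p` satisfies `x₀² - v x₁² + p x₂² ∈ {1, -v, p} ⊆ ℤ_p`.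
The unit `v` is a non-residue mod `p`: for `p ≡ 3 (mod 4)` because `-1` is one, and for
`p ≡ 1 (mod 4)` because `-1` is a square while `u` is not (Hensel). Hence an integral solution of
`a² - v b² + p c² ≡ 0 (mod p²)` has `p ∣ a, b`, and then `p ∣ c`. A column with an entry of
norm `> 1`, divided by its largest entry, would be such a solution with a unit coordinate.
Compactness follows because `SO(3)_p` is closed and lies in the compact unit polydisc.
-/

theorem Matrix.transpose_mul_diagonal_mul_apply_self {n R : Type*} [Fintype n] [DecidableEq n]
    [CommSemiring R] (d : n → R) (L : Matrix n n R) (j : n) :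
    (Lᵀ * diagonal d * L) j j = ∑ i, d i * L i j ^ 2 := by
  rw [mul_apply]
  simp only [mul_diagonal, transpose_apply]
  exact Finset.sum_congr rfl fun i _ => by ring

theorem Matrix.isClosed_setOf_transpose_mul_mul_eq_and_det_eq_one {n R : Type*} [Fintype n]
    [DecidableEq n] [CommRing R] [TopologicalSpace R] [IsTopologicalRing R] [T2Space R]
    (A : Matrix n n R) : IsClosed {L : Matrix n n R | Lᵀ * A * L = A ∧ L.det = 1} :=
  (isClosed_eq ((continuous_id.matrix_transpose.matrix_mul continuous_const).matrix_mul
    continuous_id) continuous_const).inter (isClosed_eq continuous_id.matrix_det continuous_const)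

theorem Matrix.isCompact_setOf_forall_norm_le {m n E : Type*} [Finite m] [Finite n]
    [SeminormedAddCommGroup E] [ProperSpace E] (r : ℝ) :
    IsCompact {L : Matrix m n E | ∀ i j, ‖L i j‖ ≤ r} := by
  have h : {L : Matrix m n E | ∀ i j, ‖L i j‖ ≤ r} =
      Set.univ.pi fun _ => Set.univ.pi fun _ => Metric.closedBall 0 r := by
    ext L
    exact ⟨fun h i _ j _ => mem_closedBall_zero_iff.2 (h i j),
      fun h i j => mem_closedBall_zero_iff.1 (h i trivial j trivial)⟩
  rw [h]
  exact isCompact_univ_pi fun _ => isCompact_univ_pi fun _ => isCompact_closedBall 0 r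

theorem eq_zero_and_eq_zero_of_sq_sub_mul_sq_eq_zero {K : Type*} [Field K] {v a b : K}
    (hv : ¬ IsSquare v) (h : a ^ 2 - v * b ^ 2 = 0) : a = 0 ∧ b = 0 := by
  have hb : b = 0 := by
    by_contra hb
    exact hv ⟨a / b, by field_simp; linear_combination -h⟩
  subst hb
  exact ⟨pow_eq_zero_iff two_ne_zero |>.mp (by simpa using h), rfl⟩

namespace PadicInt

variable {p : ℕ} [Fact p.Prime]

theorem dvd_iff_toZMod_eq_zero (x : ℤ_[p]) : (p : ℤ_[p]) ∣ x ↔ toZMod x = 0 := by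
  rw [← Ideal.mem_span_singleton, ← maximalIdeal_eq_span_p, ← ker_toZMod, RingHom.mem_ker]

theorem norm_eq_one_iff_toZMod_ne_zero (x : ℤ_[p]) : ‖x‖ = 1 ↔ toZMod x ≠ 0 := by
  rw [Ne, ← dvd_iff_toZMod_eq_zero, ← norm_lt_one_iff_dvd, not_lt]
  exact ⟨ge_of_eq, (norm_le_one x).antisymm⟩

theorem isSquare_of_isSquare_toZMod (hp : p ≠ 2) {u : ℤ_[p]} (hu : ‖u‖ = 1)
    (h : IsSquare (toZMod u)) : IsSquare u := by
  obtain ⟨w, hw⟩ := h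
  set a : ℤ_[p] := (w.val : ℤ_[p])
  have ha : toZMod a = w := by simp [a]
  have ha1 : ‖a‖ = 1 := by
    rw [norm_eq_one_iff_toZMod_ne_zero, ha]
    rintro rfl
    exact (norm_eq_one_iff_toZMod_ne_zero u).1 hu (by simpa using hw)
  have h2 : ‖(2 : ℤ_[p])‖ = 1 := by
    have := norm_natCast_eq_one_iff (p := p) (n := 2)
    push_cast at this
    exact this.2 ((Nat.coprime_primes Fact.out Nat.prime_two).2 hp)
  set F : Polynomial ℤ_[p] := Polynomial.X ^ 2 - Polynomial.C u
  have hFa : ‖F.aeval a‖ < 1 := by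
    rw [norm_lt_one_iff_dvd, dvd_iff_toZMod_eq_zero]
    simp [F, ha, hw, sq]
  have hF'a : ‖F.derivative.aeval a‖ = 1 := by
    have : F.derivative.aeval a = 2 * a := by simp [F, one_add_one_eq_two]
    rw [this, norm_mul, h2, ha1, one_mul]
  obtain ⟨z, hz, -⟩ := hensels_lemma (F := F) (a := a) (by rwa [hF'a, one_pow])
  exact ⟨z, (by simpa [F, sub_eq_zero, sq] using hz : z * z = u).symm⟩

theorem dvd_and_dvd_of_dvd_sq_sub_mul_sq {v a b : ℤ_[p]} (hv : ¬ IsSquare (toZMod v))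
    (h : (p : ℤ_[p]) ∣ a ^ 2 - v * b ^ 2) : (p : ℤ_[p]) ∣ a ∧ (p : ℤ_[p]) ∣ b := by
  simp only [dvd_iff_toZMod_eq_zero] at h ⊢
  simp only [map_sub, map_mul, map_pow] at h
  exact eq_zero_and_eq_zero_of_sq_sub_mul_sq_eq_zero hv h

theorem dvd_of_sq_dvd_sq_sub_mul_sq_add_p_mul_sq {v a b c : ℤ_[p]} (hv : ¬ IsSquare (toZMod v))
    (h : (p : ℤ_[p]) ^ 2 ∣ a ^ 2 - v * b ^ 2 + p * c ^ 2) :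
    (p : ℤ_[p]) ∣ a ∧ (p : ℤ_[p]) ∣ b ∧ (p : ℤ_[p]) ∣ c := by
  obtain ⟨⟨a', rfl⟩, ⟨b', rfl⟩⟩ := dvd_and_dvd_of_dvd_sq_sub_mul_sq hv
    ((dvd_add_left (dvd_mul_right _ _)).1 ((dvd_pow_self _ two_ne_zero).trans h))
  refine ⟨dvd_mul_right _ _, dvd_mul_right _ _, prime_p.dvd_of_dvd_pow (n := 2) ?_⟩
  have hpc : (p : ℤ_[p]) ^ 2 ∣ p * c ^ 2 :=
    (dvd_add_right (Dvd.intro (a' ^ 2 - v * b' ^ 2) (by ring))).1 h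
  rwa [sq (p : ℤ_[p]), mul_dvd_mul_iff_left prime_p.ne_zero] at hpc

theorem not_isSquare_toZMod_of_mod_four (hp2 : 2 < p) {u v : ℤ_[p]}
    (hu : ¬ IsSquare (toZMod u)) (hv3 : p % 4 = 3 → v = -1) (hv1 : p % 4 = 1 → v = -u) : ¬ IsSquare (toZMod v) := by
  have hodd : p % 2 = 1 := Nat.odd_iff.1 ((Fact.out : p.Prime).odd_of_ne_two (by omega))
  rcases (by omega : p % 4 = 1 ∨ p % 4 = 3) with h4 | h4
  · rintro ⟨s, hs⟩
    obtain ⟨t, ht⟩ := ZMod.exists_sq_eq_neg_one_iff.2 (by omega : p % 4 ≠ 3)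
    rw [hv1 h4, map_neg] at hs
    exact hu ⟨t * s, by linear_combination -hs + s * s * ht⟩
  · rw [hv3 h4, map_neg, map_one, ZMod.exists_sq_eq_neg_one_iff]
    omega

end PadicInt

namespace Padic

variable {p : ℕ} [Fact p.Prime]

theorem norm_le_one_of_norm_sq_sub_mul_sq_add_p_mul_sq_le_one {v : ℤ_[p]}
    (hv : ¬ IsSquare (PadicInt.toZMod v)) (x : Fin 3 → ℚ_[p])
    (hx : ‖x 0 ^ 2 - v * x 1 ^ 2 + p * x 2 ^ 2‖ ≤ 1) (i : Fin 3) : ‖x i‖ ≤ 1 := by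
  obtain ⟨j, hj⟩ := Finite.exists_max fun i => ‖x i‖
  refine (hj i).trans (not_lt.1 fun hj1 => ?_)
  have hxj : x j ≠ 0 := norm_pos_iff.1 (one_pos.trans hj1)
  have hpj : (p : ℝ) ≤ ‖x j‖ := by
    simpa using (norm_le_pow_iff_norm_lt_pow_add_one (x j) 0).not.1 (by simpa using hj1)
  let y : Fin 3 → ℤ_[p] := fun i =>
    ⟨x i / x j, by rw [norm_div, div_le_one (norm_pos_iff.2 hxj)]; exact hj i⟩
  have hy : ((y 0 ^ 2 - v * y 1 ^ 2 + p * y 2 ^ 2 : ℤ_[p]) : ℚ_[p]) =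
      (x 0 ^ 2 - v * x 1 ^ 2 + p * x 2 ^ 2) / x j ^ 2 := by
    have hyx : ∀ i, (y i : ℚ_[p]) = x i / x j := fun _ => rfl
    push_cast [hyx]
    field_simp
  have hdvd : (p : ℤ_[p]) ^ 2 ∣ y 0 ^ 2 - v * y 1 ^ 2 + p * y 2 ^ 2 := by
    rw [← Ideal.mem_span_singleton, ← PadicInt.norm_le_pow_iff_mem_span_pow, PadicInt.norm_def,
      hy, norm_div, norm_pow]
    have hp0 : (0 : ℝ) < p := by exact_mod_cast (Fact.out : p.Prime).pos
    calc _ ≤ 1 / ‖x j‖ ^ 2 := by gcongr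
      _ ≤ 1 / (p : ℝ) ^ 2 := by gcongr
      _ = (p : ℝ) ^ (-(2 : ℕ) : ℤ) := by simp
  have hyj : y j = 1 := Subtype.ext (div_self hxj)
  obtain ⟨h0, h1, h2⟩ := PadicInt.dvd_of_sq_dvd_sq_sub_mul_sq_add_p_mul_sq hv hdvd
  exact PadicInt.prime_p.not_dvd_one (by rw [← hyj]; fin_cases j <;> assumption)

end Padic

theorem SO3set.norm_sq_sub_mul_sq_add_p_mul_sq_le_one {p : ℕ} [Fact p.Prime] {v : ℤ_[p]}
    {L : Matrix (Fin 3) (Fin 3) ℚ_[p]} (hL : L ∈ SO3set p v) (j : Fin 3) :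
    ‖L 0 j ^ 2 - v * L 1 j ^ 2 + p * L 2 j ^ 2‖ ≤ 1 := by
  have hcol :=
    Matrix.transpose_mul_diagonal_mul_apply_self ![(1 : ℚ_[p]), -(v : ℚ_[p]), (p : ℚ_[p])] L j
  rw [hL.1, Matrix.diagonal_apply_eq, Fin.sum_univ_three] at hcol
  have hQ : L 0 j ^ 2 - v * L 1 j ^ 2 + p * L 2 j ^ 2 =
      ![(1 : ℚ_[p]), -(v : ℚ_[p]), (p : ℚ_[p])] j := by
    simp only [Matrix.cons_val] at hcol
    linear_combination -hcol
  rw [hQ]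
  fin_cases j
  · simp
  · simpa using v.norm_le_one
  · simpa [Padic.norm_p] using
      inv_le_one_of_one_le₀ (by exact_mod_cast (Fact.out : p.Prime).one_le)

theorem stmt2 (p : ℕ) [Fact p.Prime] (hp2 : 2 < p)
    (u : ℤ_[p]) (hu : ‖u‖ = 1) (husq : ¬ ∃ y : ℚ_[p], y ^ 2 = (u : ℚ_[p]))
    (v : ℤ_[p]) (hv3 : p % 4 = 3 → v = -1) (hv1 : p % 4 = 1 → v = -u) :
    (∀ L ∈ SO3set p v, ∀ i j, ‖L i j‖ ≤ 1) ∧ IsCompact (SO3set p v) := by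
  have hu' : ¬ IsSquare (PadicInt.toZMod u) := fun h => by
    obtain ⟨z, rfl⟩ := PadicInt.isSquare_of_isSquare_toZMod (by omega) hu h
    exact husq ⟨z, by push_cast; ring⟩
  have hv := PadicInt.not_isSquare_toZMod_of_mod_four hp2 hu' hv3 hv1
  have hbdd : ∀ L ∈ SO3set p v, ∀ i j, ‖L i j‖ ≤ 1 := fun L hL i j =>
    Padic.norm_le_one_of_norm_sq_sub_mul_sq_add_p_mul_sq_le_one hv (fun i => L i j)
      (SO3set.norm_sq_sub_mul_sq_add_p_mul_sq_le_one hL j) i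
  exact ⟨hbdd, (Matrix.isCompact_setOf_forall_norm_le 1).of_isClosed_subset
    (Matrix.isClosed_setOf_transpose_mul_mul_eq_and_det_eq_one _) hbdd⟩
end

section
/- For every κ ∈ {p, up} and every n ∈ ℕ, n ≥ 1, the image G_{κ,p^n} = π_n(SO(2)_{p,κ}) of SO(2)_{p,κ} under entrywise reduction modulo p^n is a finite group of order exactly 2·p^n. -/
open scoped Matrix

/-- Reduction of a `p`-adic number in `ℤ_p` modulo `p^n` (junk value `0` outside `ℤ_p`). -/
noncomputable def redQ (p : ℕ) [Fact p.Prime] (n : ℕ) (x : ℚ_[p]) : ZMod (p ^ n) :=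
  if h : ‖x‖ ≤ 1 then PadicInt.toZModPow n (⟨x, h⟩ : ℤ_[p]) else 0

/-- Entrywise reduction modulo `p^n` of a square matrix over `ℚ_p` with entries in `ℤ_p`. -/
noncomputable def matRed (p : ℕ) [Fact p.Prime] (n d : ℕ)
    (L : Matrix (Fin d) (Fin d) ℚ_[p]) : Matrix (Fin d) (Fin d) (ZMod (p ^ n)) :=
  L.map (redQ p n)

/-- The special orthogonal group of the binary quadratic form with matrix
`diag(a, b)` over `ℚ_p`. -/
def SO2set (p : ℕ) [Fact p.Prime] (a b : ℚ_[p]) : Set (Matrix (Fin 2) (Fin 2) ℚ_[p]) :=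
  {L | L.transpose * Matrix.diagonal ![a, b] * L = Matrix.diagonal ![a, b] ∧ L.det = 1}

/-!
For a unit `a`, the special orthogonal group of `diag(a, p)` consists of the matrices
`!![c, -k s; s, c]` (multiplication by `c + s √-k`) with `c² + k s² = 1`, where `k = p / a`.
As `‖k‖ = p⁻¹`, the norms of `c²` and `k s²` are even and odd powers of `p`, so they cannot
cancel and `c, s ∈ ℤ_p`. Modulo `p^n` the residue of `s` is arbitrary, since Hensel's lemma
gives `c = √(1 - k s²)` from `1 - k s² ≡ 1 (mod p)`; and it determines `c` up to sign, because
`c² ≡ c'² (mod p^n)` with `c'` a unit and `p` odd forces `c ≡ ±c'`. The two signs give distinct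
residues as `c` is a unit, whence `2 p^n` reductions.
-/

open PadicInt

def conic {R : Type*} [CommRing R] (k : R) : Set (R × R) := {x | x.1 ^ 2 + k * x.2 ^ 2 = 1}

@[simp]
theorem mem_conic {R : Type*} [CommRing R] {k : R} {x : R × R} :
    x ∈ conic k ↔ x.1 ^ 2 + k * x.2 ^ 2 = 1 :=
  Iff.rfl

def rotMatrix {R : Type*} [CommRing R] (k c s : R) : Matrix (Fin 2) (Fin 2) R :=
  !![c, -(k * s); s, c]

theorem rotMatrix_injective {R : Type*} [CommRing R] (k : R) :
    Function.Injective fun x : R × R => rotMatrix k x.1 x.2 := by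
  intro x y h
  exact Prod.ext (congr_fun (congr_fun h 0) 0) (congr_fun (congr_fun h 1) 0)

theorem det_rotMatrix {R : Type*} [CommRing R] (k c s : R) :
    (rotMatrix k c s).det = c ^ 2 + k * s ^ 2 := by
  rw [rotMatrix, Matrix.det_fin_two_of]
  ring

theorem transpose_mul_diagonal_mul_apply {R : Type*} [CommRing R] (a q : R)
    (L : Matrix (Fin 2) (Fin 2) R) (i j : Fin 2) :
    (Lᵀ * Matrix.diagonal ![a, q] * L) i j = a * L 0 i * L 0 j + q * L 1 i * L 1 j := by
  rw [Matrix.mul_apply, Fin.sum_univ_two, Matrix.mul_diagonal, Matrix.mul_diagonal,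
    Matrix.transpose_apply, Matrix.transpose_apply, Matrix.cons_val_zero, Matrix.cons_val_one,
    Matrix.cons_val_fin_one]
  ring

section Field

variable {K : Type*} [Field K]

theorem rotMatrix_transpose_mul_diagonal_mul {a : K} (ha : a ≠ 0) (q c s : K) :
    (rotMatrix (q / a) c s)ᵀ * Matrix.diagonal ![a, q] * rotMatrix (q / a) c s =
      (c ^ 2 + q / a * s ^ 2) • Matrix.diagonal ![a, q] := by
  ext i j
  rw [transpose_mul_diagonal_mul_apply]
  fin_cases i <;> fin_cases j <;> simp [rotMatrix] <;> field_simp <;> ring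

theorem transpose_mul_diagonal_mul_eq_and_det_eq_one_iff {a : K} (ha : a ≠ 0) (q : K)
    (L : Matrix (Fin 2) (Fin 2) K) :
    (Lᵀ * Matrix.diagonal ![a, q] * L = Matrix.diagonal ![a, q] ∧ L.det = 1) ↔
      ∃ x ∈ conic (q / a), rotMatrix (q / a) x.1 x.2 = L := by
  constructor
  · rintro ⟨hL, hdet⟩
    rw [Matrix.det_fin_two] at hdet
    have entry (i j : Fin 2) := (transpose_mul_diagonal_mul_apply a q L i j).symm.trans
      (congr_fun (congr_fun hL i) j)
    have e00 : a * L 0 0 * L 0 0 + q * L 1 0 * L 1 0 = a := by simpa using entry 0 0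
    have e01 : a * L 0 0 * L 0 1 + q * L 1 0 * L 1 1 = 0 := by simpa using entry 0 1
    have e11 : a * L 0 1 * L 0 1 + q * L 1 1 * L 1 1 = q := by simpa using entry 1 1
    have h01 : L 0 1 = -(q / a * L 1 0) := by
      field_simp
      linear_combination -(a * L 0 1) * hdet + L 1 1 * e01 - L 1 0 * e11
    have h11 : L 1 1 = L 0 0 := by
      apply mul_left_cancel₀ ha
      linear_combination (a * L 0 0) * hdet - L 1 1 * e00 + L 1 0 * e01
    refine ⟨(L 0 0, L 1 0), ?_, ?_⟩
    · rw [mem_conic]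
      field_simp
      linear_combination e00
    · ext i j
      fin_cases i <;> fin_cases j <;> simp [rotMatrix, h01, h11]
  · rintro ⟨x, hx, rfl⟩
    rw [mem_conic] at hx
    rw [rotMatrix_transpose_mul_diagonal_mul ha, det_rotMatrix, hx, one_smul]
    exact ⟨rfl, rfl⟩

end Field

variable {p : ℕ} [Fact p.Prime]

namespace PadicInt

theorem isUnit_iff_not_dvd {x : ℤ_[p]} : IsUnit x ↔ ¬ (p : ℤ_[p]) ∣ x := by
  rw [isUnit_iff, ← norm_lt_one_iff_dvd, not_lt]
  exact ⟨ge_of_eq, (norm_le_one x).antisymm⟩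

theorem isUnit_two (hp : p ≠ 2) : IsUnit (2 : ℤ_[p]) := by
  rw [isUnit_iff_not_dvd, ← norm_lt_one_iff_dvd, ← Int.cast_ofNat, norm_int_lt_one_iff_dvd]
  intro h
  have := Int.le_of_dvd two_pos h
  have := (Fact.out : p.Prime).two_le
  omega

theorem isUnit_of_dvd_sub_one {w : ℤ_[p]} (hw : (p : ℤ_[p]) ∣ w - 1) : IsUnit w :=
  isUnit_iff_not_dvd.mpr fun h => prime_p.not_isUnit <|
    isUnit_of_dvd_one (by simpa using dvd_sub h hw)

theorem toZModPow_eq_iff_dvd (n : ℕ) (x y : ℤ_[p]) :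
    toZModPow n x = toZModPow n y ↔ (p : ℤ_[p]) ^ n ∣ x - y := by
  rw [← sub_eq_zero, ← map_sub, ← RingHom.mem_ker, ker_toZModPow, Ideal.mem_span_singleton]

theorem isSquare_of_dvd_sub_one (hp : p ≠ 2) {w : ℤ_[p]} (hw : (p : ℤ_[p]) ∣ w - 1) :
    IsSquare w := by
  let F : Polynomial ℤ_[p] := .X ^ 2 - .C w
  have hF : ‖F.eval 1‖ < ‖F.derivative.eval 1‖ ^ 2 := by
    have h2 : ‖(2 : ℤ_[p])‖ = 1 := isUnit_iff.mp (isUnit_two hp)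
    simpa [F, one_add_one_eq_two, h2, norm_lt_one_iff_dvd, ← dvd_neg (b := w - 1)] using hw
  obtain ⟨c, hc, -⟩ := hensels_lemma hF
  exact ⟨c, by simpa [F, sub_eq_zero, sq, eq_comm] using hc⟩

-- `c - c'` and `c + c'` differ by the unit `2 c'`, so one of them is a unit.
theorem dvd_sub_or_dvd_add_of_dvd_sq_sub_sq (hp : p ≠ 2) {n : ℕ} {c c' : ℤ_[p]}
    (hc' : IsUnit c') (h : (p : ℤ_[p]) ^ n ∣ c ^ 2 - c' ^ 2) :
    (p : ℤ_[p]) ^ n ∣ c - c' ∨ (p : ℤ_[p]) ^ n ∣ c + c' := by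
  have hfac : c ^ 2 - c' ^ 2 = (c - c') * (c + c') := by ring
  rw [hfac] at h
  by_cases hadd : IsUnit (c + c')
  · exact .inl (hadd.dvd_mul_right.mp h)
  · have hsub : IsUnit (c - c') := by
      rw [isUnit_iff_not_dvd] at hadd ⊢
      intro hsub
      have h2 : (p : ℤ_[p]) ∣ 2 * c' := by
        simpa [two_mul, add_sub_add_left_eq_sub] using dvd_sub (not_not.mp hadd) hsub
      exact isUnit_iff_not_dvd.mp ((isUnit_two hp).mul hc') h2
    exact .inr (hsub.dvd_mul_left.mp h)

theorem exists_mem_conic (hp : p ≠ 2) {k : ℤ_[p]} (hk : (p : ℤ_[p]) ∣ k) (s : ℤ_[p]) :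
    ∃ c, (c, s) ∈ conic k ∧ IsUnit c := by
  have hw : (p : ℤ_[p]) ∣ (1 - k * s ^ 2) - 1 := by
    simpa using (hk.mul_right (s ^ 2)).neg_right
  obtain ⟨c, hc⟩ := isSquare_of_dvd_sub_one hp hw
  refine ⟨c, show c ^ 2 + k * s ^ 2 = 1 by linear_combination -hc, ?_⟩
  exact isUnit_pow_iff two_ne_zero |>.mp (by rw [sq, ← hc]; exact isUnit_of_dvd_sub_one hw)

theorem exists_dvd_sub_units_mul_of_mem_conic (hp : p ≠ 2) {k : ℤ_[p]} {n : ℕ}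
    {x y : ℤ_[p] × ℤ_[p]} (hx : x ∈ conic k) (hy : y ∈ conic k) (hy₁ : IsUnit y.1)
    (hxy : (p : ℤ_[p]) ^ n ∣ x.2 - y.2) :
    ∃ ε : ℤˣ, (p : ℤ_[p]) ^ n ∣ x.1 - (ε : ℤ) * y.1 := by
  rw [mem_conic] at hx hy
  have hsq : x.1 ^ 2 - y.1 ^ 2 = k * (y.2 + x.2) * -(x.2 - y.2) := by
    linear_combination hx - hy
  rcases dvd_sub_or_dvd_add_of_dvd_sq_sub_sq hp hy₁
    (hsq ▸ (hxy.neg_right.mul_left _)) with h | h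
  · exact ⟨1, by simpa using h⟩
  · exact ⟨-1, by simpa using h⟩

theorem ncard_image_conic (hp : p ≠ 2) {k : ℤ_[p]} (hk : (p : ℤ_[p]) ∣ k) {n : ℕ}
    (hn : n ≠ 0) : (Prod.map (toZModPow n) (toZModPow n) '' conic k).ncard = 2 * p ^ n := by
  have : NeZero (p ^ n) := ⟨pow_ne_zero n (Fact.out : p.Prime).ne_zero⟩
  have : Fact (2 < p ^ n) := ⟨lt_of_lt_of_le ((Fact.out : p.Prime).two_le.lt_of_ne' hp)
    (Nat.le_self_pow hn p)⟩
  let lift (σ : ZMod (p ^ n)) : ℤ_[p] := (σ.val : ℤ_[p])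
  have toZModPow_lift (σ) : toZModPow n (lift σ) = σ := by simp [lift]
  choose c hc hcu using fun σ => exists_mem_conic hp hk (lift σ)
  let g (x : ℤˣ × ZMod (p ^ n)) : ZMod (p ^ n) × ZMod (p ^ n) :=
    (((x.1 : ℤ) : ZMod (p ^ n)) * toZModPow n (c x.2), x.2)
  have hrange : Prod.map (toZModPow n) (toZModPow n) '' conic k = Set.range g := by
    ext y
    constructor
    · rintro ⟨x, hx, rfl⟩
      have hlift : (p : ℤ_[p]) ^ n ∣ x.2 - lift (toZModPow n x.2) := by
        rw [← toZModPow_eq_iff_dvd, toZModPow_lift]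
      obtain ⟨ε, hε⟩ := exists_dvd_sub_units_mul_of_mem_conic hp hx (hc _) (hcu _) hlift
      rw [← toZModPow_eq_iff_dvd, map_mul, map_intCast] at hε
      exact ⟨(ε, toZModPow n x.2), Prod.ext hε.symm rfl⟩
    · rintro ⟨⟨ε, σ⟩, rfl⟩
      refine ⟨((ε : ℤ) * c σ, lift σ), ?_, by simp [g, toZModPow_lift]⟩
      rcases Int.units_eq_one_or ε with rfl | rfl <;> simpa using hc σ
  have hg : Function.Injective g := by
    rintro ⟨ε, σ⟩ ⟨ε', σ'⟩ h
    obtain ⟨h₁, rfl : σ = σ'⟩ := Prod.ext_iff.mp h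
    have hε := ((hcu σ).map (toZModPow n)).mul_left_inj.mp h₁
    rcases Int.units_eq_one_or ε with rfl | rfl <;>
      rcases Int.units_eq_one_or ε' with rfl | rfl <;>
      simp_all [ZMod.neg_one_ne_one, ZMod.neg_one_ne_one.symm]
  rw [hrange, ← Nat.card_coe_set_eq, Nat.card_range_of_injective hg, Nat.card_prod,
    Nat.card_eq_fintype_card, Fintype.card_units_int, Nat.card_zmod]

end PadicInt

namespace Padic

theorem norm_le_one_of_sq_norm_le {w : ℚ_[p]} (h : ‖w‖ ^ 2 ≤ p) : ‖w‖ ≤ 1 := by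
  have hp : (1 : ℝ) < p := by exact_mod_cast (Fact.out : p.Prime).one_lt
  have hlt : ‖w‖ < p := by
    by_contra! hge
    nlinarith
  simpa using (norm_le_pow_iff_norm_lt_pow_add_one w 0).mpr (by simpa using hlt)

theorem sq_norm_ne_prime (w : ℚ_[p]) : ‖w‖ ^ 2 ≠ p := by
  intro h
  have hp : (1 : ℝ) < p := by exact_mod_cast (Fact.out : p.Prime).one_lt
  have := norm_le_one_of_sq_norm_le h.le
  nlinarith [norm_nonneg w]

theorem norm_le_one_of_sq_add_mul_sq_eq_one {k c s : ℚ_[p]} (hk : ‖k‖ = (p : ℝ)⁻¹)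
    (h : c ^ 2 + k * s ^ 2 = 1) : ‖c‖ ≤ 1 ∧ ‖s‖ ≤ 1 := by
  have hp : (0 : ℝ) < p := by exact_mod_cast (Fact.out : p.Prime).pos
  have hne : ‖c ^ 2‖ ≠ ‖k * s ^ 2‖ := by
    intro heq
    rcases eq_or_ne c 0 with rfl | hc
    · have : k * s ^ 2 = 0 := norm_eq_zero.mp (by simpa using heq.symm)
      simp [this] at h
    · apply sq_norm_ne_prime (s / c)
      rw [norm_pow, norm_mul, norm_pow, hk] at heq
      rw [norm_div, div_pow, div_eq_iff (pow_ne_zero 2 (norm_ne_zero_iff.mpr hc)), heq]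
      field_simp
  have hmax := Padic.add_eq_max_of_ne hne
  rw [h, norm_one, norm_pow, norm_mul, norm_pow, hk] at hmax
  have hc : ‖c‖ ^ 2 ≤ 1 := hmax ▸ le_max_left _ _
  have hs : (p : ℝ)⁻¹ * ‖s‖ ^ 2 ≤ 1 := hmax ▸ le_max_right _ _
  exact ⟨(pow_le_one_iff_of_nonneg (norm_nonneg _) two_ne_zero).mp hc,
    norm_le_one_of_sq_norm_le (by rwa [inv_mul_le_iff₀ hp, mul_one] at hs)⟩

end Padic

theorem SO2set_eq_image_conic {a : ℚ_[p]} (ha : a ≠ 0) (q : ℚ_[p]) :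
    SO2set p a q = (fun x => rotMatrix (q / a) x.1 x.2) '' conic (q / a) :=
  Set.ext fun L => transpose_mul_diagonal_mul_eq_and_det_eq_one_iff ha q L

theorem conic_coe_eq_image {k : ℤ_[p]} (hk : ‖k‖ = (p : ℝ)⁻¹) :
    conic (k : ℚ_[p]) =
      (fun x : ℤ_[p] × ℤ_[p] => ((x.1 : ℚ_[p]), (x.2 : ℚ_[p]))) '' conic k := by
  ext x
  constructor
  · intro h
    obtain ⟨h₁, h₂⟩ := Padic.norm_le_one_of_sq_add_mul_sq_eq_one hk h
    refine ⟨(⟨x.1, h₁⟩, ⟨x.2, h₂⟩), PadicInt.ext ?_, rfl⟩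
    exact_mod_cast h
  · rintro ⟨y, h, rfl⟩
    simpa using congr_arg ((↑) : ℤ_[p] → ℚ_[p]) h

theorem matRed_rotMatrix (n : ℕ) (k c s : ℤ_[p]) :
    matRed p n 2 (rotMatrix (k : ℚ_[p]) c s) =
      rotMatrix (toZModPow n k) (toZModPow n c) (toZModPow n s) := by
  have redQ_coe (x : ℤ_[p]) : redQ p n x = toZModPow n x := dif_pos x.2
  ext i j
  fin_cases i <;> fin_cases j <;>
    simp [matRed, rotMatrix, redQ_coe, ← PadicInt.coe_mul, ← PadicInt.coe_neg]

theorem ncard_matRed_image_SO2set (hp : p ≠ 2) (a : ℤ_[p]ˣ) {n : ℕ} (hn : n ≠ 0) :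
    (matRed p n 2 '' SO2set p a p).ncard = 2 * p ^ n := by
  set k : ℤ_[p] := p * ↑a⁻¹
  have hk : ((k : ℤ_[p]) : ℚ_[p]) = p / a := by
    rw [div_eq_mul_inv, ← eq_inv_of_mul_eq_one_left (b := ((a : ℤ_[p]) : ℚ_[p]))
      (by rw [← PadicInt.coe_mul, a.inv_mul, PadicInt.coe_one])]
    simp [k]
  have hk_norm : ‖k‖ = (p : ℝ)⁻¹ := by
    simp [k, norm_p]
  rw [SO2set_eq_image_conic (by simp), ← hk, conic_coe_eq_image hk_norm]
  simp only [Set.image_image, matRed_rotMatrix]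
  calc _ = ((fun y => rotMatrix (toZModPow n k) y.1 y.2) ''
        (Prod.map (toZModPow n) (toZModPow n) '' conic k)).ncard := by
        rw [Set.image_image]; rfl
    _ = 2 * p ^ n := by
      rw [Set.ncard_image_of_injective _ (rotMatrix_injective _),
        PadicInt.ncard_image_conic hp (dvd_mul_right _ _) hn]

theorem stmt7_general (p : ℕ) [Fact p.Prime] (hp2 : 2 < p)
    (u : ℤ_[p]) (hu : ‖u‖ = 1) :
    ∀ a b : ℚ_[p],
      ((a, b) ∈ ({((1 : ℚ_[p]), (p : ℚ_[p])),
          ((u : ℚ_[p]), (p : ℚ_[p]))} : Set (ℚ_[p] × ℚ_[p]))) →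
      ∀ n : ℕ, 1 ≤ n →
        (matRed p n 2 '' SO2set p a b).ncard = 2 * p ^ n := by
  rintro a b hab n hn
  replace hn : n ≠ 0 := Nat.one_le_iff_ne_zero.mp hn
  rcases hab with h | h <;> obtain ⟨rfl, rfl⟩ := Prod.mk.inj h
  · simpa using ncard_matRed_image_SO2set hp2.ne' 1 hn
  · exact ncard_matRed_image_SO2set hp2.ne' (isUnit_iff.mpr hu).unit hn

theorem stmt7 (p : ℕ) [Fact p.Prime] (hp2 : 2 < p)
    (u : ℤ_[p]) (hu : ‖u‖ = 1) (husq : ¬ ∃ y : ℚ_[p], y ^ 2 = (u : ℚ_[p]))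
    (v : ℤ_[p]) (hv3 : p % 4 = 3 → v = -1) (hv1 : p % 4 = 1 → v = -u) :
    ∀ a b : ℚ_[p],
      ((a, b) ∈ ({((1 : ℚ_[p]), (p : ℚ_[p])),
          ((u : ℚ_[p]), (p : ℚ_[p]))} : Set (ℚ_[p] × ℚ_[p]))) →
      ∀ n : ℕ, 1 ≤ n →
        (matRed p n 2 '' SO2set p a b).ncard = 2 * p ^ n :=
  stmt7_general p hp2 u hu
end

section
/- For κ ∈ {-v, p, up} and n ∈ ℕ, n ≥ 1, let G̃_{κ,p^n} = {L̃ ∈ M₂(ℤ/p^nℤ) : L̃ᵀ·Ā_κ·L̃ = Ā_κ and det L̃ = 1}, where Ā_κ is the entrywise reduction of A_κ modulo p^n. Then for every L̃ ∈ G̃_{κ,p^n}, the set of matrices M ∈ G̃_{κ,p^{n+1}} whose entrywise reduction modulo p^n (via the ring homomorphism ℤ/p^{n+1}ℤ → ℤ/p^nℤ) equals L̃ has exactly p elements; in particular every solution modulo p^n of the defining special orthogonal conditions lifts to a solution modulo p^{n+1}. -/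
/-!
For a unit `A`, the special orthogonal group of `diag(A, B)` consists of the matrices
`!![x, -(B/A) z; z, x]` with `A x² + B z² = A`, so lifting such a matrix from `ℤ/pⁿ` to
`ℤ/pⁿ⁺¹` amounts to lifting a point `(x₀, z₀)` of this conic. The kernel of
`ℤ/pⁿ⁺¹ → ℤ/pⁿ` has square zero, so for lifts `(x₀ + e, z₀ + f)` the conic equation becomes
the linear equation `2A x₀ e + 2B z₀ f = -δ` on the kernel. Since `p` is odd and
`A x₀² + B z₀²` is a unit of the local ring `ℤ/pⁿ⁺¹`, one of the coefficients is a unit, so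
the lifts are in bijection with the kernel, which has `p` elements.
-/

open scoped Matrix

/-- The group of solutions modulo `p^n` of the special orthogonal conditions associated
with the matrix `A` (with entries in `ℤ_p`). -/
noncomputable def SOmod (p : ℕ) [Fact p.Prime] (n d : ℕ)
    (A : Matrix (Fin d) (Fin d) ℚ_[p]) : Set (Matrix (Fin d) (Fin d) (ZMod (p ^ n))) :=
  {L | L.transpose * matRed p n d A * L = matRed p n d A ∧ L.det = 1}

namespace Matrix

variable {R S : Type*} [CommRing R] [CommRing S]

theorem fin_two_transpose_mul_diagonal_mul_eq_iff (d : Fin 2 → R)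
    (L : Matrix (Fin 2) (Fin 2) R) :
    Lᵀ * diagonal d * L = diagonal d ↔
      d 0 * L 0 0 ^ 2 + d 1 * L 1 0 ^ 2 = d 0 ∧
      d 0 * L 0 0 * L 0 1 + d 1 * L 1 0 * L 1 1 = 0 ∧
      d 0 * L 0 1 ^ 2 + d 1 * L 1 1 ^ 2 = d 1 := by
  rw [← Matrix.ext_iff, Fin.forall_fin_two, Fin.forall_fin_two, Fin.forall_fin_two]
  simp only [mul_apply, Fin.sum_univ_two, transpose_apply, diagonal_apply, Fin.isValue, if_true,
    one_ne_zero, zero_ne_one, if_false, mul_zero, add_zero, zero_add]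
  constructor
  · rintro ⟨⟨h00, h01⟩, -, h11⟩
    exact ⟨by linear_combination h00, by linear_combination h01, by linear_combination h11⟩
  · rintro ⟨h00, h01, h11⟩
    exact ⟨⟨by linear_combination h00, by linear_combination h01⟩, by linear_combination h01,
      by linear_combination h11⟩

theorem fin_two_mem_specialOrthogonal_diagonal_iff (d : Fin 2 → R) (hd : IsUnit (d 0))
    (L : Matrix (Fin 2) (Fin 2) R) :
    (Lᵀ * diagonal d * L = diagonal d ∧ L.det = 1) ↔
      L 1 1 = L 0 0 ∧ d 0 * L 0 1 + d 1 * L 1 0 = 0 ∧ d 0 * L 0 0 ^ 2 + d 1 * L 1 0 ^ 2 = d 0 := by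
  rw [fin_two_transpose_mul_diagonal_mul_eq_iff, det_fin_two]
  constructor
  · rintro ⟨⟨h00, h01, h11⟩, hdet⟩
    refine ⟨hd.mul_left_cancel ?_, ?_, h00⟩
    · linear_combination d 0 * L 0 0 * hdet + L 1 0 * h01 - L 1 1 * h00
    · linear_combination -(d 0 * L 0 1) * hdet + L 1 1 * h01 - L 1 0 * h11
  · rintro ⟨h11, h01, h00⟩
    have hdet : L 0 0 * L 1 1 - L 0 1 * L 1 0 = 1 := hd.mul_left_cancel (by
      linear_combination d 0 * L 0 0 * h11 + h00 - L 1 0 * h01)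
    exact ⟨⟨h00, by linear_combination L 0 0 * h01 + d 1 * L 1 0 * h11,
      by linear_combination L 0 1 * h01 + d 1 * L 1 1 * h11 + d 1 * hdet⟩, hdet⟩

theorem ncard_specialOrthogonal_fiber_eq (π : R →+* S) (d : Fin 2 → R) (hd : IsUnit (d 0))
    {L : Matrix (Fin 2) (Fin 2) S}
    (hL : Lᵀ * diagonal (π ∘ d) * L = diagonal (π ∘ d) ∧ L.det = 1) :
    {M : Matrix (Fin 2) (Fin 2) R |
        (Mᵀ * diagonal d * M = diagonal d ∧ M.det = 1) ∧ M.map π = L}.ncard =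
      {XZ : R × R | π XZ.1 = L 0 0 ∧ π XZ.2 = L 1 0 ∧
        d 0 * XZ.1 ^ 2 + d 1 * XZ.2 ^ 2 = d 0}.ncard := by
  obtain ⟨hL11, hL01, -⟩ := (fin_two_mem_specialOrthogonal_diagonal_iff _ (hd.map π) L).mp hL
  simp only [Function.comp_apply] at hL01
  simp_rw [fin_two_mem_specialOrthogonal_diagonal_iff d hd]
  apply Set.ncard_congr (fun M _ => (M 0 0, M 1 0))
  · rintro M ⟨⟨-, -, hM⟩, rfl⟩
    exact ⟨rfl, rfl, hM⟩
  · rintro M M' ⟨⟨hM11, hM01, -⟩, -⟩ ⟨⟨hM'11, hM'01, -⟩, -⟩ h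
    rw [Prod.mk.injEq] at h
    have h01 : M 0 1 = M' 0 1 :=
      hd.mul_left_cancel (by linear_combination hM01 - hM'01 - d 1 * h.2)
    ext i j
    fin_cases i <;> fin_cases j
    exacts [h.1, h01, h.2, hM11.trans (h.1.trans hM'11.symm)]
  · rintro ⟨X, Z⟩ ⟨hX, hZ, hq⟩
    have hY : d 0 * -(↑hd.unit⁻¹ * d 1 * Z) = -(d 1 * Z) := by
      linear_combination (-(d 1 * Z)) * hd.mul_val_inv
    refine ⟨!![X, -(↑hd.unit⁻¹ * d 1 * Z); Z, X], ⟨⟨rfl, ?_, hq⟩, ?_⟩, rfl⟩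
    · simp only [of_apply, cons_val', cons_val_zero, cons_val_one, empty_val', cons_val_fin_one]
      linear_combination hY
    · have hπY : π (-(↑hd.unit⁻¹ * d 1 * Z)) = L 0 1 := (hd.map π).mul_left_cancel (by
        rw [← map_mul, hY, map_neg, map_mul, hZ]
        linear_combination -hL01)
      ext i j
      fin_cases i <;> fin_cases j
      exacts [hX, hπY, hZ, hX.trans hL11.symm]

end Matrix

section SquareZeroLifting

variable {R S : Type*} [CommRing R] [CommRing S]

theorem Ideal.ncard_linear_eq_of_isUnit_left (I : Ideal R) {a b c : R} (ha : IsUnit a)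
    (hc : c ∈ I) :
    {ef : R × R | ef.1 ∈ I ∧ ef.2 ∈ I ∧ a * ef.1 + b * ef.2 = c}.ncard = Nat.card I := by
  have hset : {ef : R × R | ef.1 ∈ I ∧ ef.2 ∈ I ∧ a * ef.1 + b * ef.2 = c} =
      (fun f => (↑ha.unit⁻¹ * (c - b * f), f)) '' (I : Set R) := by
    ext ⟨e, f⟩
    simp only [Set.mem_ofPred_eq, Set.mem_image, SetLike.mem_coe, Prod.mk.injEq]
    constructor
    · rintro ⟨-, hf, hef⟩
      refine ⟨f, hf, ?_, rfl⟩
      rw [← hef, add_sub_cancel_right, ← mul_assoc, ha.val_inv_mul, one_mul]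
    · rintro ⟨f, hf, rfl, rfl⟩
      refine ⟨I.mul_mem_left _ (I.sub_mem hc (I.mul_mem_left _ hf)), hf, ?_⟩
      rw [← mul_assoc, ha.mul_val_inv, one_mul, sub_add_cancel]
  rw [hset, Set.ncard_image_of_injective _ fun _ _ h => congrArg Prod.snd h,
    ← Nat.card_coe_set_eq]
  rfl

theorem Ideal.ncard_linear_eq (I : Ideal R) {a b c : R} (hab : IsUnit a ∨ IsUnit b)
    (hc : c ∈ I) :
    {ef : R × R | ef.1 ∈ I ∧ ef.2 ∈ I ∧ a * ef.1 + b * ef.2 = c}.ncard = Nat.card I := by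
  rcases hab with ha | hb
  · exact I.ncard_linear_eq_of_isUnit_left ha hc
  · rw [← I.ncard_linear_eq_of_isUnit_left (b := a) hb hc,
      ← Set.ncard_image_of_injective _ Prod.swap_injective, Set.image_swap_eq_preimage_swap]
    congr 1
    ext ⟨e, f⟩
    simp only [Set.mem_ofPred_eq, Set.mem_preimage, Prod.swap_prod_mk, add_comm (a * f)]
    tauto

theorem ncard_conic_lifts [IsLocalRing R] [Nontrivial S] (π : R →+* S)
    (hπ : Function.Surjective π) (hsq : ∀ e ∈ RingHom.ker π, ∀ f ∈ RingHom.ker π, e * f = 0)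
    (h2 : IsUnit (2 : R)) {A B C : R} (hC : IsUnit C) {x z : S}
    (hxz : π A * x ^ 2 + π B * z ^ 2 = π C) :
    {XZ : R × R | π XZ.1 = x ∧ π XZ.2 = z ∧ A * XZ.1 ^ 2 + B * XZ.2 ^ 2 = C}.ncard =
      Nat.card (RingHom.ker π) := by
  set I := RingHom.ker π
  obtain ⟨X₀, rfl⟩ := hπ x
  obtain ⟨Z₀, rfl⟩ := hπ z
  set δ := A * X₀ ^ 2 + B * Z₀ ^ 2 - C with hδ_def
  have hδ : δ ∈ I := by
    rw [RingHom.mem_ker, map_sub, map_add, map_mul, map_mul, map_pow, map_pow, hxz, sub_self]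
  have hunit : IsUnit (A * X₀ ^ 2 + B * Z₀ ^ 2) := by
    by_contra hnu
    have hδm : δ ∈ IsLocalRing.maximalIdeal R :=
      IsLocalRing.le_maximalIdeal (RingHom.ker_ne_top π) hδ
    exact (IsLocalRing.mem_maximalIdeal C).mp (by
      simpa [δ] using Ideal.sub_mem _ ((IsLocalRing.mem_maximalIdeal _).mpr hnu) hδm) hC
  have hcoeff : IsUnit (2 * A * X₀) ∨ IsUnit (2 * B * Z₀) := by
    rw [mul_assoc, mul_assoc]
    refine (IsLocalRing.isUnit_or_isUnit_of_isUnit_add hunit).imp (fun h => h2.mul ?_)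
      (fun h => h2.mul ?_) <;>
    · rw [sq, ← mul_assoc] at h
      exact isUnit_of_mul_isUnit_left h
  have hset : {XZ : R × R | π XZ.1 = π X₀ ∧ π XZ.2 = π Z₀ ∧ A * XZ.1 ^ 2 + B * XZ.2 ^ 2 = C} =
      (fun ef : R × R => (X₀ + ef.1, Z₀ + ef.2)) ''
        {ef : R × R | ef.1 ∈ I ∧ ef.2 ∈ I ∧ 2 * A * X₀ * ef.1 + 2 * B * Z₀ * ef.2 = -δ} := by
    ext ⟨X, Z⟩
    simp only [Set.mem_ofPred_eq, Set.mem_image, Prod.exists, Prod.mk.injEq]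
    constructor
    · rintro ⟨hX, hZ, hq⟩
      have he : X - X₀ ∈ I := (RingHom.sub_mem_ker_iff π).mpr hX
      have hf : Z - Z₀ ∈ I := (RingHom.sub_mem_ker_iff π).mpr hZ
      refine ⟨X - X₀, Z - Z₀, ⟨he, hf, ?_⟩, add_sub_cancel _ _, add_sub_cancel _ _⟩
      linear_combination hq - hδ_def - A * hsq _ he _ he - B * hsq _ hf _ hf
    · rintro ⟨e, f, ⟨he, hf, hlin⟩, rfl, rfl⟩
      refine ⟨by rw [map_add, RingHom.mem_ker.mp he, add_zero],
        by rw [map_add, RingHom.mem_ker.mp hf, add_zero], ?_⟩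
      linear_combination hlin + hδ_def + A * hsq _ he _ he + B * hsq _ hf _ hf
  rw [hset, Set.ncard_image_of_injective _ fun _ _ h => ?_, I.ncard_linear_eq hcoeff
    (I.neg_mem hδ)]
  rw [Prod.mk.injEq] at h
  exact Prod.ext (add_left_cancel h.1) (add_left_cancel h.2)

end SquareZeroLifting

namespace ZMod

variable {p : ℕ} [hp : Fact p.Prime]

theorem nontrivial_prime_pow {k : ℕ} (hk : k ≠ 0) : Nontrivial (ZMod (p ^ k)) :=
  nontrivial_iff.mpr (Nat.one_lt_pow hk hp.out.one_lt).ne'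

theorem isLocalRing_prime_pow {k : ℕ} (hk : k ≠ 0) : IsLocalRing (ZMod (p ^ k)) :=
  haveI := nontrivial_prime_pow (p := p) hk
  IsLocalRing.of_surjective (PadicInt.toZModPow k) (ringHom_surjective _)

theorem exists_eq_prime_pow_mul_of_mem_ker_castHom {n : ℕ} {y : ZMod (p ^ (n + 1))}
    (hy : y ∈ RingHom.ker (castHom (pow_dvd_pow p n.le_succ) (ZMod (p ^ n)))) :
    ∃ w : ZMod (p ^ (n + 1)), y = p ^ n * w := by
  rw [RingHom.mem_ker, ← natCast_zmod_val y, map_natCast, natCast_eq_zero_iff] at hy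
  obtain ⟨k, hk⟩ := hy
  exact ⟨k, by rw [← natCast_zmod_val y, hk]; push_cast; rfl⟩

theorem mul_eq_zero_of_mem_ker_castHom {n : ℕ} (hn : n ≠ 0) {e f : ZMod (p ^ (n + 1))}
    (he : e ∈ RingHom.ker (castHom (pow_dvd_pow p n.le_succ) (ZMod (p ^ n))))
    (hf : f ∈ RingHom.ker (castHom (pow_dvd_pow p n.le_succ) (ZMod (p ^ n)))) :
    e * f = 0 := by
  obtain ⟨w, rfl⟩ := exists_eq_prime_pow_mul_of_mem_ker_castHom he
  obtain ⟨w', rfl⟩ := exists_eq_prime_pow_mul_of_mem_ker_castHom hf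
  have hpow : (p : ZMod (p ^ (n + 1))) ^ (n + n) = 0 := by
    rw [← Nat.cast_pow, natCast_eq_zero_iff]
    exact pow_dvd_pow p (by omega)
  linear_combination (w * w') * hpow

theorem card_ker_castHom (n : ℕ) :
    Nat.card (RingHom.ker (castHom (pow_dvd_pow p n.le_succ) (ZMod (p ^ n)))) = p := by
  set π := castHom (pow_dvd_pow p n.le_succ) (ZMod (p ^ n))
  have h := AddSubgroup.card_mul_index π.toAddMonoidHom.ker
  rw [AddSubgroup.index_ker, AddMonoidHom.range_eq_top.mpr (ringHom_surjective π),
    AddSubgroup.card_top, Nat.card_zmod, Nat.card_zmod] at h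
  exact Nat.eq_of_mul_eq_mul_right (pow_pos hp.out.pos n) (h.trans (pow_succ' p n))

end ZMod

section Reduction

variable {p : ℕ} [Fact p.Prime]

theorem redQ_zero (N : ℕ) : redQ p N 0 = 0 := by
  rw [redQ, dif_pos (by simp)]
  exact map_zero _

theorem matRed_diagonal (N d : ℕ) (w : Fin d → ℚ_[p]) :
    matRed p N d (Matrix.diagonal w) = Matrix.diagonal fun i => redQ p N (w i) :=
  Matrix.diagonal_map (redQ_zero N)

theorem castHom_redQ (n : ℕ) {x : ℚ_[p]} (hx : ‖x‖ ≤ 1) :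
    ZMod.castHom (pow_dvd_pow p n.le_succ) (ZMod (p ^ n)) (redQ p (n + 1) x) = redQ p n x := by
  rw [redQ, redQ, dif_pos hx, dif_pos hx]
  exact RingHom.congr_fun (PadicInt.zmod_cast_comp_toZModPow n (n + 1) n.le_succ) _

theorem isUnit_redQ (N : ℕ) {x : ℚ_[p]} (hx : ‖x‖ = 1) : IsUnit (redQ p N x) := by
  rw [redQ, dif_pos hx.le]
  exact (PadicInt.isUnit_iff.mpr hx).map _

theorem ncard_SOmod_fiber_diagonal (hp2 : 2 < p) {n : ℕ} (hn : n ≠ 0) (w : Fin 2 → ℚ_[p])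
    (hw0 : ‖w 0‖ = 1) (hw1 : ‖w 1‖ ≤ 1) {L : Matrix (Fin 2) (Fin 2) (ZMod (p ^ n))}
    (hL : L ∈ SOmod p n 2 (Matrix.diagonal w)) :
    {M : Matrix (Fin 2) (Fin 2) (ZMod (p ^ (n + 1))) |
      M ∈ SOmod p (n + 1) 2 (Matrix.diagonal w) ∧
      M.map (ZMod.castHom (pow_dvd_pow p n.le_succ) (ZMod (p ^ n))) = L}.ncard = p := by
  have := ZMod.isLocalRing_prime_pow (p := p) n.succ_ne_zero
  have := ZMod.nontrivial_prime_pow (p := p) hn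
  set π := ZMod.castHom (pow_dvd_pow p n.le_succ) (ZMod (p ^ n))
  have hred : (π ∘ fun i => redQ p (n + 1) (w i)) = fun i => redQ p n (w i) :=
    funext <| Fin.forall_fin_two.mpr ⟨castHom_redQ n hw0.le, castHom_redQ n hw1⟩
  have h2 : IsUnit (2 : ZMod (p ^ (n + 1))) := by
    have h : ¬ p ∣ 2 := fun h => absurd (Nat.le_of_dvd two_pos h) (by omega)
    exact_mod_cast (ZMod.isUnit_natCast_iff_not_dvd_pow Fact.out n.succ_pos).mpr h
  simp only [SOmod, matRed_diagonal, Set.mem_ofPred_eq] at hL ⊢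
  rw [← hred] at hL
  have hconic := ((Matrix.fin_two_mem_specialOrthogonal_diagonal_iff _
    ((isUnit_redQ _ hw0).map π) L).mp hL).2.2
  rw [Matrix.ncard_specialOrthogonal_fiber_eq π _ (isUnit_redQ _ hw0) hL,
    ncard_conic_lifts π (ZMod.ringHom_surjective π)
      (fun _ he _ hf => ZMod.mul_eq_zero_of_mem_ker_castHom hn he hf) h2 (isUnit_redQ _ hw0)
      hconic,
    ZMod.card_ker_castHom]

end Reduction

theorem stmt11_general (p : ℕ) [Fact p.Prime] (hp2 : 2 < p)
    (u : ℤ_[p]) (hu : ‖u‖ = 1)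
    (v : ℤ_[p]) :
    ∀ a b : ℚ_[p],
      ((a, b) ∈ ({((1 : ℚ_[p]), -(v : ℚ_[p])), ((1 : ℚ_[p]), (p : ℚ_[p])),
          ((u : ℚ_[p]), (p : ℚ_[p]))} : Set (ℚ_[p] × ℚ_[p]))) →
      ∀ n : ℕ, 1 ≤ n →
        ∀ L ∈ SOmod p n 2 (Matrix.diagonal ![a, b]),
          {M : Matrix (Fin 2) (Fin 2) (ZMod (p ^ (n + 1))) |
            M ∈ SOmod p (n + 1) 2 (Matrix.diagonal ![a, b]) ∧
            M.map (ZMod.castHom (pow_dvd_pow p (Nat.le_succ n)) (ZMod (p ^ n))) = L}.ncard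
            = p := by
  intro a b hab n hn L hL
  simp only [Set.mem_insert_iff, Set.mem_singleton_iff, Prod.mk.injEq] at hab
  have hp_le : ‖(p : ℚ_[p])‖ ≤ 1 := Padic.norm_p_lt_one.le
  rcases hab with ⟨rfl, rfl⟩ | ⟨rfl, rfl⟩ | ⟨rfl, rfl⟩ <;>
    refine ncard_SOmod_fiber_diagonal hp2 (Nat.one_le_iff_ne_zero.mp hn) _ ?_ ?_ hL
  exacts [norm_one, (norm_neg _).trans_le v.norm_le_one, norm_one, hp_le, hu, hp_le]

theorem stmt11 (p : ℕ) [Fact p.Prime] (hp2 : 2 < p)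
    (u : ℤ_[p]) (hu : ‖u‖ = 1) (husq : ¬ ∃ y : ℚ_[p], y ^ 2 = (u : ℚ_[p]))
    (v : ℤ_[p]) (hv3 : p % 4 = 3 → v = -1) (hv1 : p % 4 = 1 → v = -u) :
    ∀ a b : ℚ_[p],
      ((a, b) ∈ ({((1 : ℚ_[p]), -(v : ℚ_[p])), ((1 : ℚ_[p]), (p : ℚ_[p])),
          ((u : ℚ_[p]), (p : ℚ_[p]))} : Set (ℚ_[p] × ℚ_[p]))) →
      ∀ n : ℕ, 1 ≤ n →
        ∀ L ∈ SOmod p n 2 (Matrix.diagonal ![a, b]),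
          {M : Matrix (Fin 2) (Fin 2) (ZMod (p ^ (n + 1))) |
            M ∈ SOmod p (n + 1) 2 (Matrix.diagonal ![a, b]) ∧
            M.map (ZMod.castHom (pow_dvd_pow p (Nat.le_succ n)) (ZMod (p ^ n))) = L}.ncard
            = p :=
  stmt11_general p hp2 u hu v
end

section
/- For n ∈ ℕ, n ≥ 1, let G̃_{p^n} = {L̃ ∈ M₃(ℤ/p^nℤ) : L̃ᵀ·Ā₊·L̃ = Ā₊ and det L̃ = 1}, where Ā₊ is the entrywise reduction of A₊ = diag(1, -v, p) modulo p^n. Then for every L̃ ∈ G̃_{p^n}, the set of matrices M ∈ G̃_{p^{n+1}} whose entrywise reduction modulo p^n (via the ring homomorphism ℤ/p^{n+1}ℤ → ℤ/p^nℤ) equals L̃ has exactly p³ elements; in particular every solution modulo p^n of the defining special orthogonal conditions lifts to a solution modulo p^{n+1}. -/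
/-!
Put `R = ℤ/p^(n+1)` and `ε = p^n`, so that reduction `R → ℤ/p^n` has kernel `εR` and `ε² = 0`.
If `M₁` is one solution lifting `L̃`, every lift of `L̃` is `M₁ (1 + Z)` with `Z` having entries
in `εR`, and the two equations for it become linear: `Zᵀ A + A Z = 0` and `tr Z = 0`. Since
`p ε = 0`, on such `Z` the form `A` acts as `diag(1, -v, 0)`; as `2` and `v` are units, this pins
down every entry of `Z` except `Z₁₀, Z₂₀, Z₂₁`, which are free in `εR ≅ ℤ/p`: `p³` lifts.

A first solution exists. For any lift `M₀` write `M₀ᵀ A M₀ = A + εB`; the correction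
`M₀ (1 + εY)` solves both equations as soon as `ε B₂₂ = 0`, the `(2,2)` entry being the only one
of `ε (Yᵀ A + A Y)` that vanishes for every `Y`. And `ε B₂₂ = 0` is forced by determinants:
`det (A + εB) = det A - ε v B₂₂`, while `(det M₀)² det A = det A` because `p ε = 0`.
-/

open scoped Matrix

open Matrix

section SquareZero

variable {n R : Type*} [CommRing R] {ε : R}

theorem exists_eq_smul_of_mem_span {Z : Matrix n n R} (hZ : ∀ i j, Z i j ∈ Ideal.span {ε}) :
    ∃ X : Matrix n n R, Z = ε • X := by
  choose X hX using fun i j => Ideal.mem_span_singleton'.mp (hZ i j)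
  exact ⟨Matrix.of X, by ext i j; simp [← hX i j, mul_comm]⟩

theorem map_eq_zero_iff_mem_ker {S : Type*} [CommRing S] (f : R →+* S) (Z : Matrix n n R) :
    Z.map f = 0 ↔ ∀ i j, Z i j ∈ RingHom.ker f := by
  simp [← Matrix.ext_iff, RingHom.mem_ker]

variable [Fintype n]

theorem isSkewAdjoint_iff_add_eq_zero (J Z : Matrix n n R) :
    J.IsSkewAdjoint Z ↔ Zᵀ * J + J * Z = 0 := by
  rw [Matrix.IsSkewAdjoint, Matrix.IsAdjointPair, Matrix.mul_neg, ← sub_eq_zero, sub_neg_eq_add]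

variable [DecidableEq n]

theorem det_one_add_smul_of_mul_self_eq_zero (hε : ε * ε = 0) (X : Matrix n n R) :
    (1 + ε • X).det = 1 + ε * X.trace := by
  rw [det_one_add_smul, sq, hε, mul_zero, add_zero, mul_comm]

theorem transpose_mul_mul_mul_one_add_smul (hε : ε * ε = 0) {A B M : Matrix n n R}
    (hM : Mᵀ * A * M = A + ε • B) (X : Matrix n n R) :
    (M * (1 + ε • X))ᵀ * A * (M * (1 + ε • X)) = A + ε • (B + Xᵀ * A + A * X) := by
  have hconj : (M * (1 + ε • X))ᵀ * A * (M * (1 + ε • X)) =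
      (1 + ε • X)ᵀ * (Mᵀ * A * M) * (1 + ε • X) := by
    simp only [transpose_mul, Matrix.mul_assoc]
  rw [hconj, hM]
  simp only [transpose_add, transpose_one, transpose_smul, add_mul, mul_add, one_mul, mul_one,
    Matrix.smul_mul, Matrix.mul_smul, smul_smul, hε, zero_smul, smul_add, add_zero]
  abel

end SquareZero

/-- `𝔰𝔬(A) ⊗ I`. For `I` square-zero, the solutions of `Mᵀ A M = A, det M = 1` lying over a given
solution modulo `I` form a torsor under it (`setOf_lift_eq_image`). -/
def skewAdjointTraceZero {n R : Type*} [Fintype n] [CommRing R] (I : Ideal R)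
    (A : Matrix n n R) : Set (Matrix n n R) :=
  {Z | (∀ i j, Z i j ∈ I) ∧ A.IsSkewAdjoint Z ∧ Z.trace = 0}

section Lifts

variable {n R S : Type*} [Fintype n] [DecidableEq n] [CommRing R] [CommRing S]
  {ε : R} (hε : ε * ε = 0) {A : Matrix n n R}
include hε

theorem orthogonal_mul_one_add_iff {M₁ Z : Matrix n n R} (hM₁ : M₁ᵀ * A * M₁ = A)
    (hdet : M₁.det = 1) (hZ : ∀ i j, Z i j ∈ Ideal.span {ε}) :
    ((M₁ * (1 + Z))ᵀ * A * (M₁ * (1 + Z)) = A ∧ (M₁ * (1 + Z)).det = 1) ↔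
      A.IsSkewAdjoint Z ∧ Z.trace = 0 := by
  obtain ⟨X, rfl⟩ := exists_eq_smul_of_mem_span hZ
  have hM₁' : M₁ᵀ * A * M₁ = A + ε • 0 := by rw [smul_zero, add_zero, hM₁]
  rw [transpose_mul_mul_mul_one_add_smul hε hM₁', zero_add, det_mul, hdet,
    one_mul, det_one_add_smul_of_mul_self_eq_zero hε, isSkewAdjoint_iff_add_eq_zero, trace_smul,
    smul_eq_mul, transpose_smul, Matrix.smul_mul, Matrix.mul_smul, ← smul_add, add_eq_left,
    add_eq_left]

theorem setOf_lift_eq_image (f : R →+* S) (hker : RingHom.ker f = Ideal.span {ε})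
    {M₁ : Matrix n n R} (hM₁ : M₁ᵀ * A * M₁ = A) (hdet : M₁.det = 1) :
    {M | (Mᵀ * A * M = A ∧ M.det = 1) ∧ M.map f = M₁.map f} =
      (fun Z => M₁ * (1 + Z)) '' skewAdjointTraceZero (RingHom.ker f) A := by
  have hM₁u : IsUnit M₁.det := hdet ▸ isUnit_one
  ext M
  constructor
  · rintro ⟨hsol, hMf⟩
    have hZ : ∀ i j, (M₁⁻¹ * M - 1) i j ∈ RingHom.ker f := by
      rw [← map_eq_zero_iff_mem_ker, ← RingHom.mapMatrix_apply, map_sub, map_mul, map_one,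
        f.mapMatrix_apply M, hMf, ← RingHom.mapMatrix_apply, ← map_mul,
        nonsing_inv_mul _ hM₁u, map_one, sub_self]
    have hMZ : M₁ * (1 + (M₁⁻¹ * M - 1)) = M := by
      rw [add_sub_cancel, ← Matrix.mul_assoc, mul_nonsing_inv _ hM₁u, Matrix.one_mul]
    refine ⟨_, ⟨hZ, ?_⟩, hMZ⟩
    rw [← orthogonal_mul_one_add_iff hε hM₁ hdet (hker ▸ hZ), hMZ]
    exact hsol
  · rintro ⟨Z, ⟨hZ, hZA⟩, rfl⟩
    refine ⟨(orthogonal_mul_one_add_iff hε hM₁ hdet (hker ▸ hZ)).mpr hZA, ?_⟩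
    rw [← RingHom.mapMatrix_apply, map_mul, map_add, map_one, f.mapMatrix_apply Z,
      (map_eq_zero_iff_mem_ker f Z).mpr hZ, add_zero, Matrix.mul_one, RingHom.mapMatrix_apply]

theorem ncard_setOf_lift (f : R →+* S) (hker : RingHom.ker f = Ideal.span {ε})
    {M₁ : Matrix n n R} (hM₁ : M₁ᵀ * A * M₁ = A) (hdet : M₁.det = 1) :
    {M | (Mᵀ * A * M = A ∧ M.det = 1) ∧ M.map f = M₁.map f}.ncard =
      (skewAdjointTraceZero (RingHom.ker f) A).ncard := by
  have hM₁u : IsUnit M₁ := (isUnit_iff_isUnit_det M₁).mpr (hdet ▸ isUnit_one)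
  rw [setOf_lift_eq_image hε f hker hM₁ hdet]
  exact Set.ncard_image_of_injective _ fun Z Z' h => add_left_cancel (hM₁u.mul_left_cancel h)

end Lifts

section Diagonal

variable {R : Type*} [CommRing R] {ε : R} {α β : R}

theorem det_diagonal_add_smul (hε : ε * ε = 0) (a b c : R) (B : Matrix (Fin 3) (Fin 3) R) :
    (diagonal ![a, b, c] + ε • B).det =
      a * b * c + ε * (b * c * B 0 0 + a * c * B 1 1 + a * b * B 2 2) := by
  simp only [det_fin_three, Matrix.add_apply, Matrix.smul_apply, smul_eq_mul, diagonal_apply_eq,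
    ne_eq, Fin.reduceEq, not_false_eq_true, diagonal_apply_ne, cons_val_zero, cons_val_one, cons_val,
    zero_add]
  linear_combination (a * (B 1 1 * B 2 2 - B 1 2 * B 2 1) + b * (B 0 0 * B 2 2 - B 0 2 * B 2 0)
    + c * (B 0 0 * B 1 1 - B 0 1 * B 1 0) + ε * (B 0 0 * B 1 1 * B 2 2 - B 0 0 * B 1 2 * B 2 1
      - B 0 1 * B 1 0 * B 2 2 + B 0 1 * B 1 2 * B 2 0 + B 0 2 * B 1 0 * B 2 1
      - B 0 2 * B 1 1 * B 2 0)) * hε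

theorem mul_apply_two_two_eq_zero_of_transpose_mul_mul (hε : ε * ε = 0) (hα : IsUnit α)
    (hεβ : ε * β = 0) {M B : Matrix (Fin 3) (Fin 3) R} {k : R}
    (hM : Mᵀ * diagonal ![1, α, β] * M = diagonal ![1, α, β] + ε • B)
    (hdet : M.det = 1 + ε * k) : ε * B 2 2 = 0 := by
  have h := congrArg det hM
  rw [det_mul, det_mul, det_transpose, hdet, det_diagonal_add_smul hε, det_diagonal,
    Fin.prod_univ_three] at h
  simp only [cons_val_zero, cons_val_one, cons_val, one_mul] at h
  have hαB : α * (ε * B 2 2) = 0 := by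
    linear_combination -h + (2 * k * α - α * B 0 0 - B 1 1) * hεβ + (k * k * α * β) * hε
  exact hα.mul_right_eq_zero.mp hαB

theorem exists_smul_correction (h2 : IsUnit (2 : R)) (hα : IsUnit α) (hεβ : ε * β = 0)
    (B : Matrix (Fin 3) (Fin 3) R) (hB : ∀ i j, ε * B i j = ε * B j i) (hB₂₂ : ε * B 2 2 = 0)
    (k : R) :
    ∃ Y : Matrix (Fin 3) (Fin 3) R,
      ε • (B + Yᵀ * diagonal ![1, α, β] + diagonal ![1, α, β] * Y) = 0 ∧
        ε * (k + Y.trace) = 0 := by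
  obtain ⟨z, hz⟩ := h2.exists_right_inv
  obtain ⟨a, ha⟩ := hα.exists_right_inv
  -- `Yᵀ A + A Y = -B` solved entrywise: halve on the diagonal, use the upper triangle, and take
  -- `Y₂₂` from the trace condition
  refine ⟨!![-z * B 0 0, -B 0 1, -B 0 2; 0, -z * a * B 1 1, -a * B 1 2;
    0, 0, -k + z * B 0 0 + z * a * B 1 1], ?_, ?_⟩
  · ext i j
    fin_cases i <;> fin_cases j <;>
      simp only [Fin.zero_eta, Fin.mk_one, Fin.reduceFinMk, Matrix.smul_apply, Matrix.add_apply,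
        mul_diagonal, diagonal_mul, transpose_apply, of_apply, cons_val', cons_val_zero,
        cons_val_one, cons_val, cons_val_fin_one, mul_one, one_mul, zero_mul, mul_zero, add_zero,
        neg_mul, mul_neg, add_neg_cancel, smul_eq_mul, Matrix.zero_apply]
    · linear_combination (-ε * B 0 0) * hz
    · linear_combination hB 1 0
    · linear_combination (-ε * B 1 1) * hz - (2 * z * ε * B 1 1) * ha
    · linear_combination (-ε * B 1 2) * ha
    · linear_combination hB 2 0
    · linear_combination hB 2 1 - (ε * B 1 2) * ha
    · linear_combination hB₂₂ + 2 * (-k + z * B 0 0 + z * a * B 1 1) * hεβ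
  · simp only [trace_fin_three, of_apply, cons_val', cons_val_zero, cons_val_one, cons_val,
      cons_val_fin_one]
    ring

theorem exists_lift_of_diagonal {S : Type*} [CommRing S] (f : R →+* S)
    (hf : Function.Surjective f) (hε : ε * ε = 0) (hker : RingHom.ker f = Ideal.span {ε})
    (h2 : IsUnit (2 : R)) (hα : IsUnit α) (hεβ : ε * β = 0) (L : Matrix (Fin 3) (Fin 3) S)
    (hL : Lᵀ * (diagonal ![1, α, β]).map f * L = (diagonal ![1, α, β]).map f)
    (hLdet : L.det = 1) :
    ∃ M : Matrix (Fin 3) (Fin 3) R,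
      (Mᵀ * diagonal ![1, α, β] * M = diagonal ![1, α, β] ∧ M.det = 1) ∧ M.map f = L := by
  set D : Matrix (Fin 3) (Fin 3) R := diagonal ![1, α, β]
  obtain ⟨M₀, hM₀⟩ : ∃ M₀ : Matrix (Fin 3) (Fin 3) R, M₀.map f = L :=
    ⟨L.map (Function.surjInv hf), by ext; simp [Function.surjInv_eq hf]⟩
  obtain ⟨B, hB⟩ : ∃ B, M₀ᵀ * D * M₀ - D = ε • B := by
    refine exists_eq_smul_of_mem_span (hker ▸ (map_eq_zero_iff_mem_ker f _).mp ?_)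
    rw [Matrix.map_sub _ (map_sub f), Matrix.map_mul, Matrix.map_mul, transpose_map, hM₀, hL,
      sub_self]
  obtain ⟨k, hk⟩ : ∃ k, k * ε = M₀.det - 1 := by
    rw [← Ideal.mem_span_singleton', ← hker, RingHom.mem_ker, map_sub, map_one, RingHom.map_det,
      RingHom.mapMatrix_apply, hM₀, hLdet, sub_self]
  have hM₀D : M₀ᵀ * D * M₀ = D + ε • B := by rw [← hB, add_sub_cancel]
  have hdet₀ : M₀.det = 1 + ε * k := by linear_combination -hk
  have hBsymm : ∀ i j, ε * B i j = ε * B j i := by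
    have hsymm : (ε • B)ᵀ = ε • B := by
      rw [← hB, transpose_sub, transpose_mul, transpose_mul, transpose_transpose,
        diagonal_transpose, Matrix.mul_assoc]
    intro i j
    simpa using congrFun (congrFun hsymm j) i
  obtain ⟨Y, hY, htr⟩ := exists_smul_correction h2 hα hεβ B hBsymm
    (mul_apply_two_two_eq_zero_of_transpose_mul_mul hε hα hεβ hM₀D hdet₀) k
  have hfε : f ε = 0 := by
    rw [← RingHom.mem_ker, hker]
    exact Ideal.mem_span_singleton_self ε
  refine ⟨M₀ * (1 + ε • Y), ⟨?_, ?_⟩, ?_⟩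
  · rw [transpose_mul_mul_mul_one_add_smul hε hM₀D Y, hY, add_zero]
  · rw [det_mul, hdet₀, det_one_add_smul_of_mul_self_eq_zero hε]
    linear_combination htr + (k * Y.trace) * hε
  · rw [Matrix.map_mul, hM₀]
    convert L.mul_one
    ext i j
    simp [one_apply, hfε]

theorem skewAdjointTraceZero_diagonal_eq_range (I : Ideal R) (h2 : IsUnit (2 : R))
    (hα : IsUnit α) (hβ : ∀ x ∈ I, β * x = 0) :
    skewAdjointTraceZero I (diagonal ![1, α, β]) =
      Set.range fun x : I × I × I => !![0, -α * x.1, 0; (x.1 : R), 0, 0; x.2.1, x.2.2, 0] := by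
  ext Z
  simp only [skewAdjointTraceZero, isSkewAdjoint_iff_add_eq_zero, Set.mem_ofPred_eq,
    Set.mem_range, Prod.exists, Subtype.exists]
  constructor
  · rintro ⟨hI, hskew, htr⟩
    have e := fun i j => congrFun (congrFun hskew i) j
    have e00 := e 0 0
    have e01 := e 0 1
    have e02 := e 0 2
    have e11 := e 1 1
    have e12 := e 1 2
    simp only [Matrix.add_apply, mul_diagonal, diagonal_mul, transpose_apply, cons_val_zero,
      cons_val_one, cons_val, mul_one, one_mul, Matrix.zero_apply] at e00 e01 e02 e11 e12
    have h00 : Z 0 0 = 0 := h2.mul_right_eq_zero.mp (by linear_combination e00)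
    have h11 : Z 1 1 = 0 := (h2.mul hα).mul_right_eq_zero.mp (by linear_combination e11)
    have h02 : Z 0 2 = 0 := by linear_combination e02 - hβ _ (hI 2 0)
    have h12 : Z 1 2 = 0 :=
      hα.mul_right_eq_zero.mp (by linear_combination e12 - hβ _ (hI 2 1))
    have h22 : Z 2 2 = 0 := by
      rw [trace_fin_three, h00, h11] at htr
      linear_combination htr
    refine ⟨Z 1 0, hI 1 0, Z 2 0, hI 2 0, Z 2 1, hI 2 1, ?_⟩
    ext i j
    fin_cases i <;> fin_cases j <;>
      simp only [Fin.zero_eta, Fin.mk_one, Fin.reduceFinMk, of_apply, cons_val', cons_val_zero,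
        cons_val_one, cons_val, cons_val_fin_one, neg_mul, h00, h11, h02, h12, h22]
    linear_combination -e01
  · rintro ⟨x, hx, y, hy, w, hw, rfl⟩
    refine ⟨?_, ?_, ?_⟩
    · intro i j
      fin_cases i <;> fin_cases j <;> simp [hx, hy, hw, I.mul_mem_left]
    · ext i j
      fin_cases i <;> fin_cases j <;>
        simp [mul_diagonal, diagonal_mul, mul_comm _ β, mul_comm x α, hβ y hy, hβ w hw]
    · simp [trace_fin_three]

theorem ncard_skewAdjointTraceZero_diagonal (h2 : IsUnit (2 : R)) (hα : IsUnit α)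
    (hεβ : ε * β = 0) :
    (skewAdjointTraceZero (Ideal.span {ε}) (diagonal ![1, α, β])).ncard =
      Nat.card (Ideal.span {ε}) ^ 3 := by
  have hβ : ∀ x ∈ Ideal.span {ε}, β * x = 0 := by
    intro x hx
    obtain ⟨c, rfl⟩ := Ideal.mem_span_singleton'.mp hx
    rw [mul_left_comm, mul_comm β, hεβ, mul_zero]
  rw [skewAdjointTraceZero_diagonal_eq_range _ h2 hα hβ, ← Nat.card_coe_set_eq,
    Nat.card_range_of_injective, Nat.card_prod, Nat.card_prod, pow_three]
  rintro ⟨x, y, w⟩ ⟨x', y', w'⟩ h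
  have hx := congrFun (congrFun h 1) 0
  have hy := congrFun (congrFun h 2) 0
  have hw := congrFun (congrFun h 2) 1
  simp only [of_apply, cons_val', cons_val_zero, cons_val_one, cons_val_two, empty_val',
    cons_val_fin_one, tail_cons] at hx hy hw
  simp [Subtype.ext hx, Subtype.ext hy, Subtype.ext hw]

end Diagonal

theorem ZMod.ker_castHom {d m : ℕ} [NeZero m] (h : d ∣ m) :
    RingHom.ker (ZMod.castHom h (ZMod d)) = Ideal.span {(d : ZMod m)} := by
  ext r
  rw [RingHom.mem_ker, Ideal.mem_span_singleton']
  constructor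
  · intro hr
    rw [← natCast_zmod_val r, map_natCast, natCast_eq_zero_iff] at hr
    obtain ⟨c, hc⟩ := hr
    exact ⟨c, by rw [← natCast_zmod_val r, hc, Nat.cast_mul, mul_comm]⟩
  · rintro ⟨c, rfl⟩
    rw [map_mul, map_natCast, natCast_self, mul_zero]

theorem ZMod.card_ker_castHom_s12 {d m : ℕ} [NeZero m] (h : d ∣ m) :
    Nat.card (RingHom.ker (ZMod.castHom h (ZMod d))) = m / d := by
  have hcard := (ZMod.castHom h (ZMod d)).toAddMonoidHom.ker.card_mul_index
  rw [AddSubgroup.index_ker, AddMonoidHom.range_eq_top_of_surjective _ (castHom_surjective h),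
    AddSubgroup.card_top, Nat.card_zmod, Nat.card_zmod] at hcard
  have hd : d ≠ 0 := by rintro rfl; exact NeZero.ne m (zero_dvd_iff.mp h)
  exact (Nat.div_eq_of_eq_mul_left (Nat.pos_of_ne_zero hd) hcard.symm).symm

theorem ZMod.natCast_pow_eq_zero {p m k : ℕ} (h : m ≤ k) : (p : ZMod (p ^ m)) ^ k = 0 := by
  rw [← Nat.cast_pow, ZMod.natCast_eq_zero_iff]
  exact pow_dvd_pow p h

theorem ZMod.isUnit_two_of_prime_pow {p : ℕ} (hp : p.Prime) (hp2 : p ≠ 2) (m : ℕ) :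
    IsUnit (2 : ZMod (p ^ m)) := by
  have h := (ZMod.isUnit_iff_coprime 2 (p ^ m)).mpr
    (((Nat.coprime_primes Nat.prime_two hp).mpr hp2.symm).pow_right m)
  exact_mod_cast h

section Padic

variable (p : ℕ) [Fact p.Prime]

theorem redQ_coe (m : ℕ) (x : ℤ_[p]) : redQ p m x = PadicInt.toZModPow m x := by
  rw [redQ, dif_pos x.2]
  rfl

theorem matRed_diagonal_s12 (m : ℕ) (v : ℤ_[p]) :
    matRed p m 3 (diagonal ![(1 : ℚ_[p]), -(v : ℚ_[p]), (p : ℚ_[p])]) =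
      diagonal ![1, -PadicInt.toZModPow m v, (p : ZMod (p ^ m))] := by
  have hv : -(v : ℚ_[p]) = ((-v : ℤ_[p]) : ℚ_[p]) := by push_cast; rfl
  have hp : (p : ℚ_[p]) = ((p : ℤ_[p]) : ℚ_[p]) := by push_cast; rfl
  have h0 : redQ p m 0 = 0 := by simpa using redQ_coe p m 0
  rw [matRed, diagonal_map h0]
  congr 1
  ext i
  fin_cases i
  · simpa using redQ_coe p m 1
  · show redQ p m (-(v : ℚ_[p])) = -PadicInt.toZModPow m v
    rw [hv, redQ_coe, map_neg]
  · show redQ p m (p : ℚ_[p]) = p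
    rw [hp, redQ_coe, map_natCast]

theorem map_castHom_matRed (n d : ℕ) (A : Matrix (Fin d) (Fin d) ℚ_[p]) :
    (matRed p (n + 1) d A).map (ZMod.castHom (pow_dvd_pow p n.le_succ) (ZMod (p ^ n))) =
      matRed p n d A := by
  ext i j
  simp only [matRed, map_apply, redQ]
  split
  · exact RingHom.congr_fun (PadicInt.zmod_cast_comp_toZModPow n (n + 1) n.le_succ) _
  · simp

end Padic

theorem stmt12_general (p : ℕ) [Fact p.Prime] (hp2 : 2 < p)
    (u : ℤ_[p]) (hu : ‖u‖ = 1)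
    (v : ℤ_[p]) (hv3 : p % 4 = 3 → v = -1) (hv1 : p % 4 = 1 → v = -u) :
    ∀ n : ℕ, 1 ≤ n →
      ∀ L ∈ SOmod p n 3 (Matrix.diagonal ![(1 : ℚ_[p]), -(v : ℚ_[p]), (p : ℚ_[p])]),
        {M : Matrix (Fin 3) (Fin 3) (ZMod (p ^ (n + 1))) |
          M ∈ SOmod p (n + 1) 3 (Matrix.diagonal ![(1 : ℚ_[p]), -(v : ℚ_[p]), (p : ℚ_[p])]) ∧
          M.map (ZMod.castHom (pow_dvd_pow p (Nat.le_succ n)) (ZMod (p ^ n))) = L}.ncard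
          = p ^ 3 := by
  intro n hn L ⟨hL, hLdet⟩
  have hp : p.Prime := Fact.out
  have hv : IsUnit v := by
    rw [PadicInt.isUnit_iff]
    rcases (by have := hp.eq_two_or_odd; omega : p % 4 = 1 ∨ p % 4 = 3) with h | h
    · rw [hv1 h, norm_neg, hu]
    · rw [hv3 h, norm_neg, norm_one]
  set f := ZMod.castHom (pow_dvd_pow p n.le_succ) (ZMod (p ^ n))
  set ε : ZMod (p ^ (n + 1)) := (p : ZMod (p ^ (n + 1))) ^ n
  have hε : ε * ε = 0 := by rw [← pow_add]; exact ZMod.natCast_pow_eq_zero (by omega)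
  have hεp : ε * p = 0 := by rw [← pow_succ]; exact ZMod.natCast_pow_eq_zero le_rfl
  have hker : RingHom.ker f = Ideal.span {ε} := by simp [f, ε, ZMod.ker_castHom]
  have h2 := ZMod.isUnit_two_of_prime_pow hp (by omega) (n + 1)
  have hα := (hv.map (PadicInt.toZModPow (n + 1))).neg
  have hA := matRed_diagonal_s12 p (n + 1) v
  rw [← map_castHom_matRed, hA] at hL
  obtain ⟨M₁, ⟨hM₁, hM₁det⟩, rfl⟩ :=
    exists_lift_of_diagonal f (ZMod.castHom_surjective _) hε hker h2 hα hεp L hL hLdet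
  simp only [SOmod, hA, Set.mem_ofPred_eq]
  rw [ncard_setOf_lift hε f hker hM₁ hM₁det, hker, ncard_skewAdjointTraceZero_diagonal h2 hα hεp,
    ← hker, ZMod.card_ker_castHom_s12, pow_succ p n, Nat.mul_div_cancel_left _ (pow_pos hp.pos n)]

theorem stmt12 (p : ℕ) [Fact p.Prime] (hp2 : 2 < p)
    (u : ℤ_[p]) (hu : ‖u‖ = 1) (husq : ¬ ∃ y : ℚ_[p], y ^ 2 = (u : ℚ_[p]))
    (v : ℤ_[p]) (hv3 : p % 4 = 3 → v = -1) (hv1 : p % 4 = 1 → v = -u) :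
    ∀ n : ℕ, 1 ≤ n →
      ∀ L ∈ SOmod p n 3 (Matrix.diagonal ![(1 : ℚ_[p]), -(v : ℚ_[p]), (p : ℚ_[p])]),
        {M : Matrix (Fin 3) (Fin 3) (ZMod (p ^ (n + 1))) |
          M ∈ SOmod p (n + 1) 3 (Matrix.diagonal ![(1 : ℚ_[p]), -(v : ℚ_[p]), (p : ℚ_[p])]) ∧
          M.map (ZMod.castHom (pow_dvd_pow p (Nat.le_succ n)) (ZMod (p ^ n))) = L}.ncard
          = p ^ 3 :=
  stmt12_general p hp2 u hu v hv3 hv1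
end
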